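/- arXiv:math/0509188 — 10 statements merged into one kernel-verified Lean document; each statement's English description precedes it below -/
import Mathlib

section
/- If R and R' are commutative rings with R' an integral domain, and φ : Mₙ(R) → Mₙ'(R') is an injective ring homomorphism, then n ≤ n'. -/
/-!
The nilpotent Jordan block `∑ᵢ Eᵢ,ᵢ₊₁` in `Mₙ(R)` has nilpotency class exactly `n`, and an
injective ring homomorphism preserves nilpotency classes. Over a reduced ring, a nilpotent
`n' × n'` matrix has characteristic polynomial `X ^ n'` (its difference with `X ^ n'` is
nilpotent), so by Cayley–Hamilton its nilpotency class is at most `n'`.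
-/

open Polynomial

lemma nilpotencyClass_le_of_pow_eq_zero {M : Type*} [Zero M] [Pow M ℕ] {x : M} {k : ℕ}
    (h : x ^ k = 0) : nilpotencyClass x ≤ k :=
  Nat.sInf_le h

lemma nilpotencyClass_map_of_injective {M N F : Type*} [MonoidWithZero M] [MonoidWithZero N]
    [FunLike F M N] [MonoidWithZeroHomClass F M N] {f : F} (hf : Function.Injective f) (x : M) :
    nilpotencyClass (f x) = nilpotencyClass x := by
  simp only [nilpotencyClass, ← map_pow, map_eq_zero_iff f hf]

namespace Matrix

section Reduced

variable {ι R : Type*} [Fintype ι] [DecidableEq ι] [CommRing R] [IsReduced R]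

lemma pow_card_eq_zero_of_isNilpotent {M : Matrix ι ι R} (hM : IsNilpotent M) :
    M ^ Fintype.card ι = 0 := by
  have hchar : M.charpoly = X ^ Fintype.card ι := sub_eq_zero.mp <| Polynomial.ext fun i ↦
    (Polynomial.isNilpotent_iff.mp (isNilpotent_charpoly_sub_pow_of_isNilpotent hM) i).eq_zero
  simpa [hchar] using M.aeval_self_charpoly

lemma nilpotencyClass_le_card {M : Matrix ι ι R} (hM : IsNilpotent M) :
    nilpotencyClass M ≤ Fintype.card ι :=
  nilpotencyClass_le_of_pow_eq_zero (pow_card_eq_zero_of_isNilpotent hM)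

end Reduced

section Shift

variable (R : Type*) [CommRing R] (n : ℕ)

def shift : Matrix (Fin n) (Fin n) R :=
  of fun i j => if (i : ℕ) + 1 = j then 1 else 0

lemma shift_pow_apply (k : ℕ) (i j : Fin n) :
    (shift R n ^ k) i j = if (i : ℕ) + k = j then 1 else 0 := by
  induction k generalizing i with
  | zero => simp [one_apply, Fin.ext_iff]
  | succ k ih =>
    simp only [pow_succ', mul_apply, ih]
    simp only [shift, of_apply, ite_mul, one_mul, zero_mul]
    rw [Fin.sum_univ_eq_sum_range
        (fun x ↦ if (i : ℕ) + 1 = x then if x + k = (j : ℕ) then (1 : R) else 0 else 0),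
      Finset.sum_ite_eq]
    grind

lemma shift_pow_self : shift R n ^ n = 0 := by
  ext i j
  rw [shift_pow_apply, if_neg (by omega), zero_apply]

lemma isNilpotent_shift : IsNilpotent (shift R n) :=
  ⟨n, shift_pow_self R n⟩

lemma nilpotencyClass_shift [Nontrivial R] : nilpotencyClass (shift R n) = n := by
  cases n with
  | zero => exact nilpotencyClass_eq_zero_of_subsingleton
  | succ m =>
    refine nilpotencyClass_eq_succ_iff.mpr ⟨shift_pow_self R _, fun h ↦ ?_⟩
    have hentry := congr_fun₂ h 0 (Fin.last m)
    simp [shift_pow_apply] at hentry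

end Shift

end Matrix

open Matrix in
/-- If `R` and `R'` are commutative rings (`R` nonzero) with `R'` an integral domain, and
`φ : Mₙ(R) → Mₙ'(R')` is an injective ring homomorphism, then `n ≤ n'`. -/
theorem matrix_ringHom_injective_le {R R' : Type*} [CommRing R] [Nontrivial R]
    [CommRing R'] [IsDomain R'] {n n' : ℕ}
    (φ : Matrix (Fin n) (Fin n) R →+* Matrix (Fin n') (Fin n') R')
    (hφ : Function.Injective φ) : n ≤ n' :=
  calc n = nilpotencyClass (φ (shift R n)) := by
        rw [nilpotencyClass_map_of_injective hφ, nilpotencyClass_shift]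
    _ ≤ Fintype.card (Fin n') := nilpotencyClass_le_card ((isNilpotent_shift R n).map φ)
    _ = n' := Fintype.card_fin n'
end

section
/- If R and R' are commutative rings and φ : Mₙ(R) → Mₙ'(R') is any (not necessarily injective) ring homomorphism with Mₙ'(R') nonzero and R' an integral domain, then n ≤ n'. -/
open Matrix in
/-- If `R` and `R'` are commutative rings and `φ : Mₙ(R) → Mₙ'(R')` is any ring homomorphism
with `Mₙ'(R')` nonzero and `R'` an integral domain, then `n ≤ n'`. -/
theorem matrix_ringHom_le {R R' : Type*} [CommRing R] [CommRing R'] [IsDomain R'] {n n' : ℕ}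
    [Nontrivial (Matrix (Fin n') (Fin n') R')]
    (φ : Matrix (Fin n) (Fin n) R →+* Matrix (Fin n') (Fin n') R') : n ≤ n' := by
  set e : Fin n → Matrix (Fin n') (Fin n') R' :=
    fun i => φ (Matrix.single i i 1) with he
  have hone : (1 : Matrix (Fin n) (Fin n) R) = ∑ i, Matrix.single i i 1 := by
    ext a b
    rw [Matrix.sum_apply]
    rcases eq_or_ne a b with rfl | hab
    · simp [Matrix.single, Matrix.one_apply]
    · rw [Matrix.one_apply_ne hab]
      symm
      apply Finset.sum_eq_zero
      intro x _
      simp only [Matrix.single, Matrix.of_apply, ite_eq_right_iff, and_imp]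
      rintro rfl rfl
      exact absurd rfl hab
  have horth : ∀ i j : Fin n, i ≠ j → e i * e j = 0 := by
    intro i j hij
    rw [he, ← _root_.map_mul φ, Matrix.single_mul_single_of_ne _ _ _ _ hij _, map_zero]
  have hid : ∀ i : Fin n, e i * e i = e i := by
    intro i
    rw [he, ← _root_.map_mul φ, Matrix.single_mul_single_same, mul_one]
  have hne : ∀ i : Fin n, e i ≠ 0 := by
    intro i h0
    have h1 : (1 : Matrix (Fin n') (Fin n') R') = 0 := by
      calc (1 : Matrix (Fin n') (Fin n') R') = φ 1 := (_root_.map_one φ).symm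
        _ = φ (∑ a, Matrix.single a i 1 * Matrix.single i i 1
              * Matrix.single i a 1) := by
            rw [hone]
            congr 1
            refine Finset.sum_congr rfl fun a _ => ?_
            rw [Matrix.single_mul_single_same, Matrix.single_mul_single_same,
              mul_one, mul_one]
        _ = ∑ a, φ (Matrix.single a i 1) * e i * φ (Matrix.single i a 1) := by
            rw [map_sum]
            refine Finset.sum_congr rfl fun a _ => ?_
            rw [_root_.map_mul φ, _root_.map_mul φ, he]
        _ = 0 := by simp [h0]
    exact one_ne_zero h1
  -- pick a nonzero column from each e i
  have hcol : ∀ i : Fin n, ∃ j k, e i j k ≠ 0 := by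
    intro i
    by_contra h
    push_neg at h
    exact hne i (by ext j k; exact h j k)
  choose j k hjk using hcol
  set v : Fin n → (Fin n' → R') := fun i => e i *ᵥ Pi.single (k i) 1 with hv
  have hvval : ∀ i, v i = fun r => e i r (k i) := by
    intro i
    funext r
    simp [hv, Matrix.mulVec_single]
  have hvne : ∀ i, v i (j i) ≠ 0 := by
    intro i
    rw [hvval]
    exact hjk i
  have hmul : ∀ l i : Fin n, e l *ᵥ v i = if l = i then v i else 0 := by
    intro l i
    rw [hv, Matrix.mulVec_mulVec]
    split
    · subst ‹l = i›; rw [hid]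
    · rw [horth l i ‹l ≠ i›, Matrix.zero_mulVec]
  have hli : LinearIndependent R' v := by
    rw [linearIndependent_iff']
    intro s g hg l hl
    have h2 : e l *ᵥ (∑ i ∈ s, g i • v i) = g l • v l := by
      rw [show e l *ᵥ ∑ i ∈ s, g i • v i = ∑ i ∈ s, g i • (e l *ᵥ v i) by
        rw [← Matrix.mulVecLin_apply, map_sum]
        exact Finset.sum_congr rfl fun i _ => by
          rw [_root_.map_smul, Matrix.mulVecLin_apply]]
      rw [Finset.sum_congr rfl (fun i _ => by rw [hmul l i])]
      simp [Finset.sum_ite_eq' s l, hl]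
    rw [hg, Matrix.mulVec_zero] at h2
    have h3 : g l * v l (j l) = 0 := by
      have := congrFun h2.symm (j l)
      simpa using this
    exact (mul_eq_zero.mp h3).resolve_right (hvne l)
  have := hli.fintype_card_le_finrank
  simpa using this
end

section
/- Let k be an algebraically closed field, R a commutative ring, and φ : Mₙ(R) → Mₙ(k) a ring homomorphism. Then for every c in the center of Mₙ(R), φ(c) is a scalar matrix (i.e., lies in the center of Mₙ(k)). -/
open Matrix

/-- If `k` is an algebraically closed field, `R` a commutative ring and
`φ : Mₙ(R) → Mₙ(k)` a ring homomorphism, then `φ` maps every central element of `Mₙ(R)` to a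
scalar matrix, i.e. into the center of `Mₙ(k)`. -/
theorem ringHom_matrix_center_algClosed {R k : Type*} [CommRing R] [Field k] [IsAlgClosed k]
    {n : ℕ} (φ : Matrix (Fin n) (Fin n) R →+* Matrix (Fin n) (Fin n) k)
    (c : Matrix (Fin n) (Fin n) R) (hc : c ∈ Subring.center (Matrix (Fin n) (Fin n) R)) :
    φ c ∈ Subring.center (Matrix (Fin n) (Fin n) k) ∧
      ∃ lam : k, φ c = Matrix.scalar (Fin n) lam := by
  rcases Nat.eq_zero_or_pos n with rfl | hn
  · refine ⟨Subring.mem_center_iff.mpr fun g => ?_, 0, ?_⟩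
    · ext i j; exact i.elim0
    · ext i j; exact i.elim0
  haveI : Nonempty (Fin n) := ⟨⟨0, hn⟩⟩
  set A := φ c with hA
  have key : ∃ lam : k, A = Matrix.scalar (Fin n) lam := by
    set f : Fin n → Fin n → Matrix (Fin n) (Fin n) k :=
      fun i j => φ (Matrix.single i j (1 : R)) with hf
    have hcomm : ∀ i j, A * f i j = f i j * A := fun i j => by
      show φ c * φ (Matrix.single i j (1 : R))
          = φ (Matrix.single i j (1 : R)) * φ c
      rw [← _root_.map_mul, ← _root_.map_mul, Subring.mem_center_iff.mp hc]
    have hmul : ∀ i j l m, f i j * f l m = if j = l then f i m else 0 := by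
      intro i j l m
      have h1 : Matrix.single i j (1 : R) * Matrix.single l m 1
          = if j = l then Matrix.single i m 1 else 0 := by
        rcases eq_or_ne j l with rfl | h
        · simp
        · simp [Matrix.single_mul_single_of_ne (h := h), h]
      show φ _ * φ _ = _
      rw [← _root_.map_mul, h1, apply_ite φ, map_zero]
    have hsum : ∑ i, f i i = 1 := by
      have h1 : (∑ i : Fin n, Matrix.single i i (1 : R)) = (1 : Matrix (Fin n) (Fin n) R) := by
        ext a b
        simp only [Matrix.single, Matrix.one_apply, Matrix.sum_apply, Matrix.of_apply]
        rcases eq_or_ne a b with rfl | h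
        · simp
        · rw [if_neg h]
          exact Finset.sum_eq_zero fun x _ => if_neg (by rintro ⟨rfl, rfl⟩; exact h rfl)
      show (∑ i, φ (Matrix.single i i (1 : R))) = 1
      rw [← map_sum, h1, _root_.map_one]
    obtain ⟨μ, hμ⟩ := Module.End.exists_eigenvalue (Matrix.mulVecLin A)
    obtain ⟨v, hvE, hv0⟩ := hμ.exists_hasEigenvector
    have hv : A *ᵥ v = μ • v := by
      simpa [Matrix.mulVecLin_apply] using Module.End.mem_eigenspace_iff.mp hvE
    have hex : ∃ i₀, f i₀ i₀ *ᵥ v ≠ 0 := by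
      by_contra h
      push_neg at h
      apply hv0
      have h2 : (1 : Matrix (Fin n) (Fin n) k) *ᵥ v = 0 := by
        have hs : ∀ (s : Finset (Fin n)), (∑ i ∈ s, f i i) *ᵥ v = ∑ i ∈ s, f i i *ᵥ v := by
          intro s
          induction s using Finset.cons_induction with
          | empty => simp
          | cons a s ha ih => simp [Finset.sum_insert ha, Matrix.add_mulVec, ih]
        rw [← hsum, hs]
        exact Finset.sum_eq_zero fun i _ => h i
      simpa using h2
    obtain ⟨i₀, hi₀⟩ := hex
    set w : Fin n → (Fin n → k) := fun j => f j i₀ *ᵥ v with hw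
    have hproj : ∀ l j, f l l *ᵥ w j = if l = j then w j else 0 := by
      intro l j
      rw [hw, Matrix.mulVec_mulVec, hmul]
      split_ifs with h
      · subst h; rfl
      · rw [Matrix.zero_mulVec]
    have hwne : ∀ j, w j ≠ 0 := by
      intro j hj
      apply hi₀
      have h2 : f i₀ j *ᵥ w j = f i₀ i₀ *ᵥ v := by
        rw [hw, Matrix.mulVec_mulVec, hmul, if_pos rfl]
      rw [hj, Matrix.mulVec_zero] at h2
      exact h2.symm
    have hwA : ∀ j, A *ᵥ w j = μ • w j := by
      intro j
      rw [hw, Matrix.mulVec_mulVec, hcomm, ← Matrix.mulVec_mulVec, hv, Matrix.mulVec_smul]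
    have hind : LinearIndependent k w := by
      rw [Fintype.linearIndependent_iff]
      intro g hg j
      have h2 : (0 : Fin n → k) = ∑ i, g i • (f j j *ᵥ w i) := by
        calc (0 : Fin n → k) = f j j *ᵥ ∑ i, g i • w i := by rw [hg, Matrix.mulVec_zero]
          _ = ∑ i, g i • (f j j *ᵥ w i) := by
              simp only [← Matrix.mulVecLin_apply, map_sum, _root_.map_smul]
      simp only [hproj, smul_ite, smul_zero, Finset.sum_ite_eq, Finset.mem_univ,
        if_true] at h2
      exact (smul_eq_zero.mp h2.symm).resolve_right (hwne j)
    set E := Module.End.eigenspace (Matrix.mulVecLin A) μ with hE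
    have hmemE : ∀ j, w j ∈ E := fun j =>
      Module.End.mem_eigenspace_iff.mpr (by rw [Matrix.mulVecLin_apply]; exact hwA j)
    have hindE : LinearIndependent k (fun j => (⟨w j, hmemE j⟩ : E)) :=
      LinearIndependent.of_comp E.subtype hind
    have hcard : n ≤ Module.finrank k E := by
      simpa using hindE.fintype_card_le_finrank
    have hEtop : E = ⊤ := by
      apply Submodule.eq_top_of_finrank_eq
      refine le_antisymm (Submodule.finrank_le E) ?_
      simpa [Module.finrank_pi] using hcard
    refine ⟨μ, ?_⟩
    ext i j
    have hmem : (Pi.single j 1 : Fin n → k) ∈ E := hEtop ▸ Submodule.mem_top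
    have hx : A *ᵥ Pi.single j 1 = μ • (Pi.single j 1 : Fin n → k) := by
      simpa [Matrix.mulVecLin_apply] using Module.End.mem_eigenspace_iff.mp hmem
    have h1 := congrFun hx i
    simp only [Matrix.mulVec_single_one, Matrix.col_apply, Matrix.transpose_apply, Pi.smul_apply,
      Pi.single_apply, smul_eq_mul] at h1
    rw [h1, Matrix.scalar_apply]
    by_cases h : i = j <;> simp [h, Matrix.one_apply, eq_comm]
  obtain ⟨lam, hlam⟩ := key
  refine ⟨?_, lam, hlam⟩
  rw [hlam]
  exact Subring.mem_center_iff.mpr fun g =>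
    ((Matrix.scalar_commute lam (fun r' => mul_comm lam r') g).symm : _)
end

section
/- Let R be a commutative ring and R' a reduced commutative ring. Any ring homomorphism φ : Mₙ(R) → Mₙ(R') maps the center of Mₙ(R) into the center of Mₙ(R'). -/
open Module LinearMap

section LinAlg

variable {K V : Type*} [Field K] [AddCommGroup V] [Module K V] [FiniteDimensional K V]

/-- Range of sum of two orthogonal idempotent endomorphisms. -/
lemma finrank_range_add_of_orth (e f : Module.End K V)
    (he : e * e = e) (hf : f * f = f) (hef : e * f = 0) (hfe : f * e = 0) :
    finrank K (LinearMap.range (e + f)) =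
      finrank K (LinearMap.range e) + finrank K (LinearMap.range f) := by
  have hr : LinearMap.range (e + f) = LinearMap.range e ⊔ LinearMap.range f := by
    apply le_antisymm
    · rintro _ ⟨x, rfl⟩
      exact Submodule.add_mem_sup ⟨x, rfl⟩ ⟨x, rfl⟩
    · rw [sup_le_iff]
      constructor <;> rintro _ ⟨x, rfl⟩
      · refine ⟨e x, ?_⟩
        have h1 : e (e x) = e x := by rw [← Module.End.mul_apply, he]
        have h2 : f (e x) = 0 := by rw [← Module.End.mul_apply, hfe]; rfl
        simp [h1, h2]
      · refine ⟨f x, ?_⟩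
        have h1 : f (f x) = f x := by rw [← Module.End.mul_apply, hf]
        have h2 : e (f x) = 0 := by rw [← Module.End.mul_apply, hef]; rfl
        simp [h1, h2]
  have hd : LinearMap.range e ⊓ LinearMap.range f = ⊥ := by
    rw [Submodule.eq_bot_iff]
    rintro x ⟨⟨a, ha⟩, ⟨b, hb⟩⟩
    have h1 : e x = x := by rw [← ha, ← Module.End.mul_apply, he]
    have h2 : e x = 0 := by rw [← hb, ← Module.End.mul_apply, hef]; rfl
    rw [← h1, h2]
  rw [hr, ← Submodule.finrank_sup_add_finrank_inf_eq, hd, finrank_bot, add_zero]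

lemma finrank_range_sum_orth {ι : Type*} [DecidableEq ι] (e : ι → Module.End K V)
    (he : OrthogonalIdempotents e) (s : Finset ι) :
    finrank K (LinearMap.range (∑ i ∈ s, e i)) =
      ∑ i ∈ s, finrank K (LinearMap.range (e i)) := by
  classical
  induction s using Finset.induction with
  | empty =>
    simp
    exact Submodule.finrank_eq_zero.2 (LinearMap.range_eq_bot.2 rfl)
  | @insert j s hj ih =>
    rw [Finset.sum_insert hj, Finset.sum_insert hj, ← ih]
    refine finrank_range_add_of_orth _ _ (he.idem j) he.isIdempotentElem_sum
      (he.mul_sum_of_notMem hj) ?_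
    rw [Finset.sum_mul]
    exact Finset.sum_eq_zero fun i hi => he.ortho (fun h => hj (h ▸ hi))

/-- An endomorphism commuting with a complete system of `n × n` matrix units of a
`n`-dimensional space is scalar. -/
lemma end_scalar_of_units {n : ℕ} (hn : n ≠ 0) (hdim : finrank K V = n)
    (F : Fin n → Fin n → Module.End K V)
    (hmul : ∀ i j k l, F i j * F k l = if j = k then F i l else 0)
    (hsum : ∑ i, F i i = 1)
    (D : Module.End K V) (hD : ∀ i j, D * F i j = F i j * D) :
    ∃ a : K, D = a • 1 := by
  have i0 : Fin n := ⟨0, Nat.pos_of_ne_zero hn⟩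
  have horth : OrthogonalIdempotents (fun i => F i i) := by
    constructor
    · intro i
      have := hmul i i i i
      simpa [IsIdempotentElem] using this
    · intro i j hij
      simpa [hij] using hmul i i j j
  -- all corner ranges have the same dimension
  have hle : ∀ i j : Fin n, finrank K (LinearMap.range (F i i)) ≤
      finrank K (LinearMap.range (F j j)) := by
    intro i j
    have e1 : F i i = F i j * F j i := by simpa using (hmul i j j i).symm
    have e2 : F j i = F j j * F j i := by simpa using (hmul j j j i).symm
    calc finrank K (LinearMap.range (F i i))
        = finrank K ((LinearMap.range (F j i)).map (F i j)) := by
          rw [e1, Module.End.mul_eq_comp, LinearMap.range_comp]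
      _ ≤ finrank K (LinearMap.range (F j i)) := Submodule.finrank_map_le _ _
      _ ≤ finrank K (LinearMap.range (F j j)) := by
          refine Submodule.finrank_mono ?_
          rw [e2]
          exact LinearMap.range_comp_le_range _ _
  have heq : ∀ i : Fin n, finrank K (LinearMap.range (F i i)) =
      finrank K (LinearMap.range (F i0 i0)) :=
    fun i => le_antisymm (hle i i0) (hle i0 i)
  have hsumrank : ∑ i : Fin n, finrank K (LinearMap.range (F i i)) = n := by
    rw [← finrank_range_sum_orth _ horth, hsum]
    rw [Module.End.one_eq_id, LinearMap.range_id, finrank_top, hdim]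
  have hr1 : finrank K (LinearMap.range (F i0 i0)) = 1 := by
    rw [Finset.sum_congr rfl (fun i _ => heq i), Finset.sum_const, Finset.card_univ,
      Fintype.card_fin, smul_eq_mul] at hsumrank
    have := Nat.eq_of_mul_eq_mul_left (Nat.pos_of_ne_zero hn)
      (hsumrank.trans (mul_one n).symm)
    exact this
  -- pick a spanning vector of the first corner range
  obtain ⟨w0, hw0mem, hw0⟩ : ∃ w0 ∈ LinearMap.range (F i0 i0), w0 ≠ 0 := by
    have : LinearMap.range (F i0 i0) ≠ ⊥ := by
      intro h
      rw [h, finrank_bot] at hr1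
      exact absurd hr1 one_ne_zero.symm
    obtain ⟨b, hb, hb0⟩ := Submodule.exists_mem_ne_zero_of_ne_bot this
    exact ⟨b, hb, hb0⟩
  have hFw0 : F i0 i0 w0 = w0 := by
    obtain ⟨y, hy⟩ := hw0mem
    rw [← hy, ← Module.End.mul_apply, horth.idem i0]
  have hspan0 : Submodule.span K {w0} = LinearMap.range (F i0 i0) :=
    Submodule.eq_of_le_of_finrank_eq
      ((Submodule.span_singleton_le_iff_mem _ _).2 hw0mem)
      (by rw [finrank_span_singleton hw0, hr1])
  -- D acts on w0 by a scalar a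
  obtain ⟨a, ha⟩ : ∃ a : K, D w0 = a • w0 := by
    have hmemD : D w0 ∈ LinearMap.range (F i0 i0) := by
      refine ⟨D w0, ?_⟩
      rw [← Module.End.mul_apply, ← hD, Module.End.mul_apply, hFw0]
    rw [← hspan0, Submodule.mem_span_singleton] at hmemD
    obtain ⟨a, ha⟩ := hmemD
    exact ⟨a, ha.symm⟩
  set w : Fin n → V := fun j => F j i0 w0 with hw
  have hFw : ∀ j, F i0 j (w j) = w0 := by
    intro j
    rw [hw, ← Module.End.mul_apply]
    have : F i0 j * F j i0 = F i0 i0 := by simpa using hmul i0 j j i0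
    rw [this, hFw0]
  have hwne : ∀ j, w j ≠ 0 := by
    intro j h
    apply hw0
    rw [← hFw j, h, map_zero]
  have hwmem : ∀ j, w j ∈ LinearMap.range (F j j) := by
    intro j
    refine ⟨F j i0 w0, ?_⟩
    rw [← Module.End.mul_apply]
    have : F j j * F j i0 = F j i0 := by simpa using hmul j j j i0
    rw [this]
  have hspanj : ∀ j, Submodule.span K {w j} = LinearMap.range (F j j) := by
    intro j
    refine Submodule.eq_of_le_of_finrank_eq
      ((Submodule.span_singleton_le_iff_mem _ _).2 (hwmem j)) ?_
    rw [finrank_span_singleton (hwne j), heq j, hr1]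
  have hDw : ∀ j, D (w j) = a • w j := by
    intro j
    rw [hw]
    simp only
    rw [← Module.End.mul_apply, hD, Module.End.mul_apply, ha, map_smul]
  have hspantop : Submodule.span K (Set.range w) = ⊤ := by
    rw [Submodule.eq_top_iff']
    intro x
    have hx : x = ∑ i : Fin n, F i i x := by
      rw [← LinearMap.sum_apply, hsum, Module.End.one_eq_id, LinearMap.id_apply]
    rw [hx]
    refine Submodule.sum_mem _ fun j _ => ?_
    have : F j j x ∈ LinearMap.range (F j j) := ⟨x, rfl⟩
    rw [← hspanj j] at this
    exact Submodule.span_mono (Set.singleton_subset_iff.2 (Set.mem_range_self j)) this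
  refine ⟨a, LinearMap.ext_on hspantop ?_⟩
  rintro _ ⟨j, rfl⟩
  rw [hDw j]
  simp [Module.End.one_eq_id]

end LinAlg

/-- The identity matrix as a sum of diagonal matrix units. -/
lemma sum_stdBasisMatrix_one {α : Type*} [NonAssocSemiring α] {n : ℕ} :
    ∑ i : Fin n, Matrix.single i i (1 : α) = 1 := by
  ext a b
  rw [Matrix.sum_apply]
  by_cases h : a = b
  · subst h
    rw [Finset.sum_eq_single a (fun i _ hi => by simp [hi]) (by simp)]
    simp
  · rw [Matrix.one_apply_ne h]
    refine Finset.sum_eq_zero fun i _ => ?_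
    exact Matrix.single_apply_of_ne _ _ _ _ _
      (by rintro ⟨rfl, rfl⟩; exact h rfl)

/-- A ring homomorphism from a matrix ring over a commutative ring to a matrix ring of the
same size over a field sends central elements to scalar matrices. -/
lemma ringHom_matrix_center_field {R K : Type*} [CommRing R] [Field K] {n : ℕ} (hn : n ≠ 0)
    (ψ : Matrix (Fin n) (Fin n) R →+* Matrix (Fin n) (Fin n) K)
    (c : Matrix (Fin n) (Fin n) R) (hc : c ∈ Subring.center (Matrix (Fin n) (Fin n) R)) :
    ∃ a : K, ψ c = a • (1 : Matrix (Fin n) (Fin n) K) := by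
  classical
  have hcent := Subring.mem_center_iff.1 hc
  set T := (Matrix.toLinAlgEquiv' : Matrix (Fin n) (Fin n) K ≃ₐ[K] _) with hT
  set F : Fin n → Fin n → Module.End K (Fin n → K) :=
    fun i j => T (ψ (Matrix.single i j 1)) with hF
  have hmul : ∀ i j k l, F i j * F k l = if j = k then F i l else 0 := by
    intro i j k l
    rw [hF]
    simp only
    rw [← map_mul, ← map_mul]
    rcases eq_or_ne j k with rfl | hjk
    · rw [Matrix.single_mul_single_same, one_mul, if_pos rfl]
    · rw [Matrix.single_mul_single_of_ne (h := hjk), if_neg hjk, map_zero, map_zero]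
  have hsum : ∑ i, F i i = 1 := by
    rw [hF]
    simp only
    rw [← map_sum, ← map_sum, sum_stdBasisMatrix_one, map_one, map_one]
  have hD : ∀ i j, T (ψ c) * F i j = F i j * T (ψ c) := by
    intro i j
    rw [hF]
    simp only
    rw [← map_mul, ← map_mul, ← map_mul, ← map_mul, hcent]
  obtain ⟨a, haa⟩ := end_scalar_of_units hn
    (by simp [Module.finrank_pi]) F hmul hsum (T (ψ c)) hD
  refine ⟨a, ?_⟩
  apply T.injective
  rw [haa, map_smul, map_one]

/-- If `R` is a commutative ring and `R'` a reduced commutative ring, then any ring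
homomorphism `φ : Mₙ(R) → Mₙ(R')` maps the center of `Mₙ(R)` into the center of `Mₙ(R')`. -/
theorem ringHom_matrix_center_reduced {R R' : Type*} [CommRing R] [CommRing R'] [IsReduced R']
    {n : ℕ} (φ : Matrix (Fin n) (Fin n) R →+* Matrix (Fin n) (Fin n) R')
    (c : Matrix (Fin n) (Fin n) R) (hc : c ∈ Subring.center (Matrix (Fin n) (Fin n) R)) :
    φ c ∈ Subring.center (Matrix (Fin n) (Fin n) R') := by
  classical
  rcases eq_or_ne n 0 with rfl | hn
  · -- the matrix ring is trivial
    rw [Subring.mem_center_iff]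
    intro g
    have : Subsingleton (Matrix (Fin 0) (Fin 0) R') :=
      ⟨fun a b => by ext i; exact absurd i.2 (Nat.not_lt_zero _)⟩
    exact Subsingleton.elim _ _
  -- reduce modulo all primes
  have key : ∀ (x : R'), (∀ (p : Ideal R'), p.IsPrime → x ∈ p) → x = 0 := by
    intro x hx
    have hnil : IsNilpotent x := by
      rw [← mem_nilradical, nilradical_eq_sInf]
      exact Ideal.mem_sInf.2 fun {J} hJ => hx J hJ
    exact hnil.eq_zero
  set d := φ c with hd
  have main : ∀ (p : Ideal R'), p.IsPrime →
      ∃ a : FractionRing (R' ⧸ p), ∀ k l : Fin n,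
        (algebraMap (R' ⧸ p) (FractionRing (R' ⧸ p))) (Ideal.Quotient.mk p (d k l)) =
          (a • (1 : Matrix (Fin n) (Fin n) (FractionRing (R' ⧸ p)))) k l := by
    intro p hp
    letI : p.IsPrime := hp
    set K := FractionRing (R' ⧸ p)
    set π : R' →+* K := (algebraMap (R' ⧸ p) K).comp (Ideal.Quotient.mk p) with hπ
    set ψ : Matrix (Fin n) (Fin n) R →+* Matrix (Fin n) (Fin n) K :=
      (π.mapMatrix).comp φ with hψ
    obtain ⟨a, ha⟩ := ringHom_matrix_center_field hn ψ c hc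
    refine ⟨a, fun k l => ?_⟩
    have : ψ c k l = (a • (1 : Matrix (Fin n) (Fin n) K)) k l := by rw [ha]
    simpa [hψ, hπ, RingHom.mapMatrix_apply, Matrix.map_apply] using this
  -- entries off the diagonal vanish, diagonal entries coincide
  have hoff : ∀ k l : Fin n, k ≠ l → d k l = 0 := by
    intro k l hkl
    refine key _ fun p hp => ?_
    obtain ⟨a, ha⟩ := main p hp
    have h1 := ha k l
    rw [Matrix.smul_apply, Matrix.one_apply_ne hkl, smul_zero] at h1
    have h0 : Ideal.Quotient.mk p (d k l) = 0 := by
      apply IsFractionRing.injective (R' ⧸ p) (FractionRing (R' ⧸ p))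
      rw [h1, map_zero]
    exact Ideal.Quotient.eq_zero_iff_mem.1 h0
  have i0 : Fin n := ⟨0, Nat.pos_of_ne_zero hn⟩
  have hdiag : ∀ k : Fin n, d k k = d i0 i0 := by
    intro k
    have hsub : d k k - d i0 i0 = 0 := by
      refine key _ fun p hp => ?_
      obtain ⟨a, ha⟩ := main p hp
      have h1 := ha k k
      have h2 := ha i0 i0
      rw [Matrix.smul_apply, Matrix.one_apply_eq, smul_eq_mul, mul_one] at h1 h2
      have h0 : Ideal.Quotient.mk p (d k k - d i0 i0) = 0 := by
        apply IsFractionRing.injective (R' ⧸ p) (FractionRing (R' ⧸ p))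
        rw [map_sub, map_sub, h1, h2, sub_self, map_zero]
      exact Ideal.Quotient.eq_zero_iff_mem.1 h0
    exact sub_eq_zero.1 hsub
  have hscal : d = (d i0 i0) • (1 : Matrix (Fin n) (Fin n) R') := by
    ext k l
    rcases eq_or_ne k l with rfl | hkl
    · rw [Matrix.smul_apply, Matrix.one_apply_eq, smul_eq_mul, mul_one, hdiag k]
    · rw [Matrix.smul_apply, Matrix.one_apply_ne hkl, smul_zero, hoff k l hkl]
  rw [Subring.mem_center_iff]
  intro g
  rw [hscal, smul_mul_assoc, mul_smul_comm, one_mul, mul_one]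
end

section
/- Let k be an algebraically closed field, V a nonzero finite-dimensional k-vector space, R a commutative ring, and ρ : Mₙ(R) → End_k(V) a ring homomorphism (sending 1 to the identity). Then dim_k V ≥ n. -/
/-- If `k` is an algebraically closed field, `V` a nonzero finite-dimensional `k`-vector space
and `ρ : Mₙ(R) → End_k(V)` a ring homomorphism, then `dim_k V ≥ n`. -/
theorem le_finrank_of_ringHom_matrix_end {k : Type*} [Field k] [IsAlgClosed k]
    {V : Type*} [AddCommGroup V] [Module k V] [FiniteDimensional k V] [Nontrivial V]
    {R : Type*} [CommRing R] {n : ℕ}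
    (ρ : Matrix (Fin n) (Fin n) R →+* Module.End k V) :
    n ≤ Module.finrank k V := by
  classical
  set E : Fin n → Fin n → Matrix (Fin n) (Fin n) R :=
    fun i j => Matrix.single i j 1 with hE
  set p : Fin n → Module.End k V := fun i => ρ (E i i) with hp
  have hmul : ∀ i j, p i * p j = if i = j then p i else 0 := by
    intro i j
    by_cases h : i = j
    · subst h
      rw [hp, ← map_mul]
      simp [hE, Matrix.single_mul_single_same]
    · rw [hp, ← map_mul]
      simp [hE, h, Matrix.single_mul_single_of_ne, if_neg h]
  have hsum : (∑ i, E i i) = 1 := by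
    ext a b
    rw [Matrix.sum_apply, Matrix.one_apply]
    by_cases h : a = b
    · subst h
      simp [hE, Matrix.single]
    · rw [if_neg h]
      refine Finset.sum_eq_zero fun x _ => ?_
      simp only [hE, Matrix.single, Matrix.of_apply]
      rw [if_neg]
      rintro ⟨rfl, rfl⟩
      exact h rfl
  have hpsum : (∑ i, p i) = 1 := by
    rw [hp]; simp only [← map_sum, hsum, map_one]
  -- each p i is nonzero
  have hpne : ∀ i, p i ≠ 0 := by
    intro i hi
    have hall : ∀ j, p j = 0 := by
      intro j
      have hEj : E j j = E j i * E i i * E i j := by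
        simp [hE, Matrix.single_mul_single_same]
      show ρ (E j j) = 0
      rw [hEj, map_mul, map_mul]
      have : ρ (E i i) = 0 := hi
      rw [this, mul_zero, zero_mul]
    have h10 : (1 : Module.End k V) = 0 := by
      rw [← hpsum]
      exact Finset.sum_eq_zero fun j _ => hall j
    exact one_ne_zero h10
  have hex : ∀ i, ∃ x : V, p i x ≠ 0 := by
    intro i
    by_contra h
    push_neg at h
    exact hpne i (LinearMap.ext fun x => h x)
  choose v hv using hex
  -- the vectors p i (v i) are linearly independent
  have hli : LinearIndependent k (fun i => p i (v i)) := by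
    rw [Fintype.linearIndependent_iff]
    intro c hc j
    have := congrArg (p j) hc
    simp only [map_sum, map_smul, map_zero] at this
    have hterm : ∀ i, p j (p i (v i)) = if i = j then p i (v i) else 0 := by
      intro i
      have := hmul j i
      by_cases h : i = j
      · subst h
        have h2 := DFunLike.congr_fun this (v i)
        simpa [Module.End.mul_apply] using h2
      · have h' : j ≠ i := Ne.symm h
        rw [if_neg h'] at this
        have h2 := DFunLike.congr_fun this (v i)
        simpa [h, Module.End.mul_apply] using h2
    rw [Finset.sum_congr rfl (fun i _ => by rw [hterm i])] at this
    simp only [smul_ite, smul_zero, Finset.sum_ite_eq', Finset.mem_univ, if_true] at this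
    have : c j • p j (v j) = 0 := this
    rcases smul_eq_zero.mp this with h | h
    · exact h
    · exact absurd h (hv j)
  simpa using hli.fintype_card_le_finrank
end

section
/- Let A be an Azumaya algebra over a commutative ring R (i.e., A is a finitely generated faithful projective R-module and the natural map A ⊗_R A^op → End_R(A) is an isomorphism). Then there is an inclusion-preserving bijection between ideals I of R and two-sided ideals of A, given by I ↦ I·A, with inverse J ↦ φ⁻¹(J) where φ : R → A is the structure map. -/
open scoped TensorProduct

/-- The natural `R`-linear map `A ⊗[R] Aᵐᵒᵖ →ₗ[R] End_R(A)`, `a ⊗ b ↦ (x ↦ a * x * b)`. -/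
noncomputable def mulLeftRightHom (R A : Type*) [CommRing R] [Ring A] [Algebra R A] :
    A ⊗[R] Aᵐᵒᵖ →ₗ[R] Module.End R A :=
  TensorProduct.lift <| LinearMap.mk₂ R
    (fun a b => LinearMap.mulLeft R a ∘ₗ LinearMap.mulRight R b.unop)
    (fun a a' b => by ext x; simp [add_mul])
    (fun r a b => by ext x; simp [smul_mul_assoc])
    (fun a b b' => by ext x; simp [mul_add])
    (fun r a b => by ext x; simp [mul_smul_comm])

/-- `A` is an Azumaya algebra over `R`: a finitely generated faithful projective `R`-module
such that the natural map `A ⊗[R] Aᵐᵒᵖ → End_R(A)` is bijective. -/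
def IsAzumayaAlg (R A : Type*) [CommRing R] [Ring A] [Algebra R A] : Prop :=
  Module.Finite R A ∧ Module.Projective R A ∧ FaithfulSMul R A ∧
    Function.Bijective (mulLeftRightHom R A)

/-- `A` has constant rank `r` over `R`: at every prime `𝔭` the localization is a free
module of rank `r` over `R_𝔭`. -/
def HasConstantRank (R A : Type*) [CommRing R] [Ring A] [Algebra R A] (r : ℕ) : Prop :=
  ∀ (p : Ideal R) [p.IsPrime],
    Module.Free (Localization.AtPrime p) (LocalizedModule p.primeCompl A) ∧
    Module.finrank (Localization.AtPrime p) (LocalizedModule p.primeCompl A) = r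

section AzumayaAux

variable {R A : Type*} [CommRing R] [Ring A] [Algebra R A]

/-- Dual basis for a finite projective module. -/
lemma azumaya_exists_dual_basis [Module.Finite R A] [Module.Projective R A] :
    ∃ (n : ℕ) (e : Fin n → A) (g : Fin n → (A →ₗ[R] R)),
      ∀ x : A, ∑ i, g i x • e i = x := by
  obtain ⟨n, f, hf⟩ := Module.Finite.exists_fin' R A
  obtain ⟨s, hs⟩ := Module.projective_lifting_property f LinearMap.id hf
  refine ⟨n, fun i => f (Pi.single i 1), fun i => (LinearMap.proj i) ∘ₗ s, fun x => ?_⟩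
  have h1 : ∀ v : Fin n → R, ∑ i, v i • f (Pi.single i 1) = f v := by
    intro v
    have : ∀ i : Fin n, v i • f (Pi.single i 1) = f (v i • (Pi.single i 1 : Fin n → R)) := by
      intro i; rw [map_smul]
    rw [Finset.sum_congr rfl fun i _ => this i, ← map_sum]
    congr 1
    ext j
    simp [Pi.single_apply]
  simpa [h1 (s x)] using congrFun (congrArg DFunLike.coe hs) x

/-- Two-sided ideals are stable under any endomorphism in the image of `mulLeftRightHom`. -/
lemma azumaya_twoSidedIdeal_stable (J : TwoSidedIdeal A) (t : A ⊗[R] Aᵐᵒᵖ) {x : A}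
    (hx : x ∈ J) : mulLeftRightHom R A t x ∈ J := by
  induction t using TensorProduct.induction_on with
  | zero => simpa using J.zero_mem
  | tmul a b =>
      have : mulLeftRightHom R A (a ⊗ₜ[R] b) x = a * (x * b.unop) := by
        simp [mulLeftRightHom]
      rw [this]
      exact J.mul_mem_left _ _ (J.mul_mem_right _ _ hx)
  | add t₁ t₂ h₁ h₂ =>
      rw [map_add, LinearMap.add_apply]
      exact J.add_mem h₁ h₂

/-- Key lemma: for any linear functional `g` and any two-sided ideal `J`,
`φ (g x) ∈ J` when `x ∈ J`. -/
lemma azumaya_key_functional (hsurj : Function.Surjective (mulLeftRightHom R A))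
    (J : TwoSidedIdeal A) (g : A →ₗ[R] R) {x : A} (hx : x ∈ J) :
    algebraMap R A (g x) ∈ J := by
  obtain ⟨t, ht⟩ := hsurj ((Algebra.linearMap R A) ∘ₗ g)
  have : algebraMap R A (g x) = mulLeftRightHom R A t x := by
    rw [ht]; simp
  rw [this]
  exact azumaya_twoSidedIdeal_stable J t hx

/-- There is a functional `h : A →ₗ[R] R` with `h 1 = 1`. -/
lemma azumaya_exists_functional_one [Module.Finite R A] [Module.Projective R A]
    [FaithfulSMul R A] : ∃ h : A →ₗ[R] R, h 1 = 1 := by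
  obtain ⟨n, e, g, hdual⟩ := azumaya_exists_dual_basis (R := R) (A := A)
  set T : Ideal R :=
    { carrier := {r | ∃ h : A →ₗ[R] R, h 1 = r}
      add_mem' := by rintro a b ⟨h₁, rfl⟩ ⟨h₂, rfl⟩; exact ⟨h₁ + h₂, rfl⟩
      zero_mem' := ⟨0, rfl⟩
      smul_mem' := by rintro c a ⟨h, rfl⟩; exact ⟨c • h, rfl⟩ } with hT
  by_cases hTop : T = ⊤
  · have : (1 : R) ∈ T := hTop ▸ Submodule.mem_top
    exact this
  · exfalso
    obtain ⟨m, hm, hTm⟩ := Ideal.exists_le_maximal T hTop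
    have hle : (⊤ : Submodule R A) ≤ m • (⊤ : Submodule R A) := by
      intro a _
      rw [← hdual a]
      refine Submodule.sum_mem _ fun i _ => Submodule.smul_mem_smul ?_ Submodule.mem_top
      refine hTm ⟨(g i) ∘ₗ LinearMap.mulLeft R a, ?_⟩
      simp
    obtain ⟨r, hr1, hr2⟩ :=
      Submodule.exists_sub_one_mem_and_smul_eq_zero_of_fg_of_le_smul m ⊤
        (Module.Finite.fg_top (R := R) (M := A)) hle
    have hr0 : r = 0 := by
      refine eq_of_smul_eq_smul (M := R) (α := A) fun a => ?_
      rw [hr2 a Submodule.mem_top, zero_smul]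
    rw [hr0, zero_sub] at hr1
    exact hm.ne_top (Ideal.eq_top_iff_one m |>.2 (by simpa using m.neg_mem hr1))

/-- The two-sided span of `φ '' I` has the same elements as `I • ⊤`. -/
lemma azumaya_mem_span_iff_smul (I : Ideal R) (x : A) :
    x ∈ TwoSidedIdeal.span ((algebraMap R A) '' I) ↔ x ∈ I • (⊤ : Submodule R A) := by
  constructor
  · intro hx
    set K : TwoSidedIdeal A := TwoSidedIdeal.mk' (I • (⊤ : Submodule R A) : Submodule R A)
      (Submodule.zero_mem _)
      (fun h₁ h₂ => Submodule.add_mem _ h₁ h₂)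
      (fun h => Submodule.neg_mem _ h)
      (fun {a y} hy => by
        refine Submodule.smul_induction_on hy (fun i hi b _ => ?_) (fun y z hy hz => ?_)
        · rw [mul_smul_comm]; exact Submodule.smul_mem_smul hi Submodule.mem_top
        · rw [mul_add]; exact Submodule.add_mem _ hy hz)
      (fun {y a} hy => by
        refine Submodule.smul_induction_on hy (fun i hi b _ => ?_) (fun y z hy hz => ?_)
        · rw [smul_mul_assoc]; exact Submodule.smul_mem_smul hi Submodule.mem_top
        · rw [add_mul]; exact Submodule.add_mem _ hy hz) with hK
    have := TwoSidedIdeal.mem_span_iff.1 hx K ?_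
    · rwa [hK, TwoSidedIdeal.mem_mk'] at this
    · rintro _ ⟨i, hi, rfl⟩
      rw [hK, SetLike.mem_coe, TwoSidedIdeal.mem_mk']
      have : algebraMap R A i = i • (1 : A) := by rw [Algebra.smul_def, mul_one]
      rw [this]
      exact Submodule.smul_mem_smul hi Submodule.mem_top
  · intro hx
    refine Submodule.smul_induction_on hx (fun i hi b _ => ?_) (fun y z hy hz => ?_)
    · rw [Algebra.smul_def]
      exact TwoSidedIdeal.mul_mem_right _ _ _
        (TwoSidedIdeal.subset_span ⟨i, hi, rfl⟩)
    · exact TwoSidedIdeal.add_mem _ hy hz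

end AzumayaAux

/-- For an Azumaya algebra `A` over `R`, there is an inclusion-preserving bijection between
ideals of `R` and two-sided ideals of `A`, given by `I ↦ I·A` with inverse `J ↦ φ⁻¹(J)`
(`φ : R → A` the structure map). -/
theorem azumaya_ideal_correspondence {R A : Type*} [CommRing R] [Ring A] [Algebra R A]
    (hA : IsAzumayaAlg R A) :
    ∃ f : Ideal R ≃o TwoSidedIdeal A,
      (∀ I : Ideal R, f I = TwoSidedIdeal.span ((algebraMap R A) '' I)) ∧
      (∀ J : TwoSidedIdeal A, f.symm J = (TwoSidedIdeal.asIdeal J).comap (algebraMap R A)) := by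
  obtain ⟨hfin, hproj, hfaith, hbij⟩ := hA
  obtain ⟨n, e, g, hdual⟩ := azumaya_exists_dual_basis (R := R) (A := A)
  obtain ⟨h₁, hh₁⟩ := azumaya_exists_functional_one (R := R) (A := A)
  set F : Ideal R → TwoSidedIdeal A := fun I => TwoSidedIdeal.span ((algebraMap R A) '' I)
    with hF
  set G : TwoSidedIdeal A → Ideal R :=
    fun J => (TwoSidedIdeal.asIdeal J).comap (algebraMap R A) with hG
  have hGF : ∀ I : Ideal R, G (F I) = I := by
    intro I
    ext r
    constructor
    · intro hr
      have hr' : algebraMap R A r ∈ F I := by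
        simpa [hG, TwoSidedIdeal.mem_asIdeal] using hr
      have hsm : algebraMap R A r ∈ I • (⊤ : Submodule R A) :=
        (azumaya_mem_span_iff_smul I _).1 hr'
      -- apply the functional h₁
      have hmem : ∀ x ∈ I • (⊤ : Submodule R A), h₁ x ∈ I := by
        intro x hx
        refine Submodule.smul_induction_on hx (fun i hi b _ => ?_) (fun y z hy hz => ?_)
        · rw [map_smul]; exact I.mul_mem_right _ hi
        · rw [map_add]; exact I.add_mem hy hz
      have := hmem _ hsm
      have heq : h₁ (algebraMap R A r) = r := by
        rw [Algebra.algebraMap_eq_smul_one, map_smul, hh₁, smul_eq_mul, mul_one]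
      rwa [heq] at this
    · intro hr
      simp only [hG, Ideal.mem_comap, TwoSidedIdeal.mem_asIdeal]
      exact TwoSidedIdeal.subset_span ⟨r, hr, rfl⟩
  have hFG : ∀ J : TwoSidedIdeal A, F (G J) = J := by
    intro J
    refine le_antisymm ?_ ?_
    · intro x hx
      refine TwoSidedIdeal.mem_span_iff.1 hx J ?_
      rintro _ ⟨r, hr, rfl⟩
      simpa [hG, TwoSidedIdeal.mem_asIdeal] using hr
    · intro x hx
      rw [← hdual x]
      refine TwoSidedIdeal.finsetSum_mem _ _ _ fun i _ => ?_
      have hgi : g i x ∈ G J := by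
        simp only [hG, Ideal.mem_comap, TwoSidedIdeal.mem_asIdeal]
        exact azumaya_key_functional hbij.surjective J (g i) hx
      rw [Algebra.smul_def]
      exact TwoSidedIdeal.mul_mem_right _ _ _
        (TwoSidedIdeal.subset_span ⟨g i x, hgi, rfl⟩)
  have hFmono : ∀ {I I' : Ideal R}, I ≤ I' → F I ≤ F I' := by
    intro I I' h
    exact TwoSidedIdeal.span_mono (Set.image_mono h)
  have hGmono : ∀ {J J' : TwoSidedIdeal A}, J ≤ J' → G J ≤ G J' := by
    intro J J' h
    exact Ideal.comap_mono (TwoSidedIdeal.asIdeal.monotone h)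
  refine ⟨{ toFun := F, invFun := G, left_inv := hGF, right_inv := hFG,
            map_rel_iff' := ?_ }, fun I => rfl, fun J => rfl⟩
  intro I I'
  show F I ≤ F I' ↔ I ≤ I'
  constructor
  · intro h
    have := hGmono h
    rwa [hGF, hGF] at this
  · exact hFmono
end

section
/- Let A be an Azumaya algebra over a commutative ring R and (𝔞ᵢ)_{i∈I} a family of ideals of R. Then the intersection ⋂ᵢ (𝔞ᵢ·A) equals (⋂ᵢ 𝔞ᵢ)·A. -/
open scoped TensorProduct

/-- `A` is an Azumaya algebra over `R`: a finitely generated faithful projective `R`-module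
such that the natural map `A ⊗[R] Aᵐᵒᵖ → End_R(A)` is bijective. -/
def IsAzumaya' (R A : Type*) [CommRing R] [Ring A] [Algebra R A] : Prop :=
  Module.Finite R A ∧ Module.Projective R A ∧ FaithfulSMul R A ∧
    Function.Bijective (mulLeftRightHom R A)

/-- In the free module `Fin n → R`, `I • ⊤` is the set of vectors with entries in `I`. -/
theorem aux_smul_top_pi {R : Type*} [CommRing R] (n : ℕ) (I : Ideal R) :
    I • (⊤ : Submodule R (Fin n → R)) =
      Submodule.pi Set.univ (fun _ : Fin n => (I : Submodule R R)) := by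
  apply le_antisymm
  · rw [Submodule.smul_le]
    intro r hr x _ j _
    exact I.mul_mem_right _ hr
  · intro x hx
    have : x = ∑ j, (x j) • (Pi.single j (1 : R) : Fin n → R) := by
      simp [← Pi.single_smul, Finset.univ_sum_single]
    rw [this]
    exact Submodule.sum_mem _ fun j _ =>
      Submodule.smul_mem_smul (hx j trivial) trivial

/-- If `A` is a direct summand of a free module via `f ∘ g = id`, then
`I • ⊤` in `A` is the preimage under `g` of `I • ⊤` in the free module. -/
theorem aux_smul_top_comap {R A : Type*} [CommRing R] [AddCommGroup A] [Module R A]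
    {n : ℕ} (f : (Fin n → R) →ₗ[R] A) (g : A →ₗ[R] Fin n → R)
    (hfg : f ∘ₗ g = LinearMap.id) (I : Ideal R) :
    I • (⊤ : Submodule R A) = (I • (⊤ : Submodule R (Fin n → R))).comap g := by
  apply le_antisymm
  · intro x hx
    have : g x ∈ Submodule.map g (I • ⊤) := Submodule.mem_map_of_mem hx
    rw [Submodule.map_smul''] at this
    exact Submodule.mem_comap.2 (Submodule.smul_mono le_rfl le_top this)
  · intro x hx
    have hx' : g x ∈ I • (⊤ : Submodule R (Fin n → R)) := hx
    have : f (g x) ∈ Submodule.map f (I • ⊤) := Submodule.mem_map_of_mem hx'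
    rw [Submodule.map_smul''] at this
    have hfgx : f (g x) = x := congrArg (· x) (congrArg DFunLike.coe hfg)
    rw [hfgx] at this
    exact Submodule.smul_mono le_rfl le_top this

theorem azumaya_iInf_smul' {R A : Type*} [CommRing R] [Ring A] [Algebra R A]
    (hfin : Module.Finite R A) (hproj : Module.Projective R A) {ι : Type*} (a : ι → Ideal R) :
    (⨅ i, a i • (⊤ : Submodule R A)) = (⨅ i, a i) • (⊤ : Submodule R A) := by
  obtain ⟨n, f, g, _, _, hfg⟩ := Module.Finite.exists_comp_eq_id_of_projective R A
  have h := fun I => aux_smul_top_comap f g hfg I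
  simp_rw [h, aux_smul_top_pi, ← Submodule.comap_iInf]
  congr 1
  ext x
  simp only [Submodule.mem_iInf, Submodule.mem_pi, Set.mem_univ, forall_true_left,
    Submodule.mem_iInf]
  tauto

/-- For an Azumaya algebra `A` over `R` and a family of ideals `(𝔞ᵢ)` of `R`,
`⋂ᵢ (𝔞ᵢ·A) = (⋂ᵢ 𝔞ᵢ)·A`. -/
theorem azumaya_iInf_smul {R A : Type*} [CommRing R] [Ring A] [Algebra R A]
    (hA : IsAzumaya' R A) {ι : Type*} (a : ι → Ideal R) :
    (⨅ i, a i • (⊤ : Submodule R A)) = (⨅ i, a i) • (⊤ : Submodule R A) := by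
  exact azumaya_iInf_smul' hA.1 hA.2.1 a
end

section
/- If A₂ ⊆ A₁ are Azumaya algebras over a commutative ring R (with the same unit), then the commutant A₁^{A₂} = { a₁ ∈ A₁ : a₁a₂ = a₂a₁ for all a₂ ∈ A₂ } is an Azumaya algebra over R, and the multiplication map A₂ ⊗_R A₁^{A₂} → A₁ is an isomorphism of R-algebras. -/
open scoped TensorProduct

set_option synthInstance.maxHeartbeats 1000000
set_option maxHeartbeats 4000000

section MLR
variable {R B : Type*} [CommRing R] [Ring B] [Algebra R B]

@[simp] lemma mlr_tmul (a : B) (b : Bᵐᵒᵖ) (x : B) :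
    mulLeftRightHom R B (a ⊗ₜ b) x = a * x * b.unop := by simp [mulLeftRightHom, mul_assoc]

lemma mlr_one : mulLeftRightHom R B 1 = 1 := by
  ext x
  simp [Algebra.TensorProduct.one_def]

lemma mlr_mul (t t' : B ⊗[R] Bᵐᵒᵖ) :
    mulLeftRightHom R B (t * t') = mulLeftRightHom R B t * mulLeftRightHom R B t' := by
  induction t using TensorProduct.induction_on with
  | zero => simp
  | add u v hu hv => simp [add_mul, hu, hv]
  | tmul a b =>
    induction t' using TensorProduct.induction_on with
    | zero => simp
    | add u v hu hv => simp [mul_add, hu, hv]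
    | tmul a' b' =>
      ext x
      simp [Algebra.TensorProduct.tmul_mul_tmul, mul_assoc]

end MLR

section Commutant
variable {R A₁ : Type*} [CommRing R] [Ring A₁] [Algebra R A₁] (A₂ : Subalgebra R A₁)

/-- The action of `A₂ ⊗ A₂ᵐᵒᵖ` on `A₁` by left/right multiplication. -/
noncomputable def psiAct : ↥A₂ ⊗[R] (↥A₂)ᵐᵒᵖ →ₗ[R] Module.End R A₁ :=
  TensorProduct.lift <| LinearMap.mk₂ R
    (fun a b => LinearMap.mulLeft R (a : A₁) ∘ₗ LinearMap.mulRight R ((b.unop : ↥A₂) : A₁))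
    (fun a a' b => by ext x; simp [add_mul])
    (fun r a b => by ext x; simp [smul_mul_assoc])
    (fun a b b' => by ext x; simp [mul_add])
    (fun r a b => by ext x; simp [mul_smul_comm])

@[simp] lemma psiAct_tmul (a : ↥A₂) (b : (↥A₂)ᵐᵒᵖ) (x : A₁) :
    psiAct A₂ (a ⊗ₜ b) x = a * x * (b.unop : ↥A₂) := by
  simp [psiAct, mul_assoc]

lemma psiAct_one : psiAct A₂ 1 = 1 := by
  ext x
  simp [Algebra.TensorProduct.one_def]

lemma psiAct_mul (t t' : ↥A₂ ⊗[R] (↥A₂)ᵐᵒᵖ) :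
    psiAct A₂ (t * t') = psiAct A₂ t * psiAct A₂ t' := by
  induction t using TensorProduct.induction_on with
  | zero => simp
  | add u v hu hv => simp [add_mul, hu, hv]
  | tmul a b =>
    induction t' using TensorProduct.induction_on with
    | zero => simp
    | add u v hu hv => simp [mul_add, hu, hv]
    | tmul a' b' =>
      ext x
      simp [Algebra.TensorProduct.tmul_mul_tmul, mul_assoc]

lemma psiAct_central {c : A₁} (hc : c ∈ Subalgebra.centralizer R (A₂ : Set A₁))
    (t : ↥A₂ ⊗[R] (↥A₂)ᵐᵒᵖ) :
    psiAct A₂ t c = ((mulLeftRightHom R ↥A₂ t 1 : ↥A₂) : A₁) * c := by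
  rw [Subalgebra.mem_centralizer_iff] at hc
  induction t using TensorProduct.induction_on with
  | zero => simp
  | add u v hu hv => simp [hu, hv, add_mul]
  | tmul a b =>
    have : c * ((b.unop : ↥A₂) : A₁) = ((b.unop : ↥A₂) : A₁) * c :=
      (hc _ (b.unop : ↥A₂).2).symm
    simp only [psiAct_tmul, mlr_tmul]
    rw [mul_assoc, this, ← mul_assoc]
    simp [mul_assoc]

end Commutant

section TF
variable {R A₁ : Type*} [CommRing R] [Ring A₁] [Algebra R A₁] {A₂ : Subalgebra R A₁}
variable (hbij : Function.Bijective (mulLeftRightHom R ↥A₂))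

/-- The linear equivalence `A₂ ⊗ A₂ᵐᵒᵖ ≃ End_R(A₂)` given by the Azumaya property. -/
noncomputable def ephi : ↥A₂ ⊗[R] (↥A₂)ᵐᵒᵖ ≃ₗ[R] Module.End R ↥A₂ :=
  LinearEquiv.ofBijective _ hbij

/-- `tf f`: the element of `A₂ ⊗ A₂ᵐᵒᵖ` acting on `A₂` as `x ↦ f x • 1`. -/
noncomputable def tf (f : Module.Dual R ↥A₂) : ↥A₂ ⊗[R] (↥A₂)ᵐᵒᵖ :=
  (ephi hbij).symm (f.smulRight 1)

lemma mlr_tf (f : Module.Dual R ↥A₂) :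
    mulLeftRightHom R ↥A₂ (tf hbij f) = f.smulRight 1 :=
  (ephi hbij).apply_symm_apply _

lemma key_swap (f : Module.Dual R ↥A₂) (a : ↥A₂) :
    (a ⊗ₜ[R] (1 : (↥A₂)ᵐᵒᵖ)) * tf hbij f
      = ((1 : ↥A₂) ⊗ₜ[R] MulOpposite.op a) * tf hbij f := by
  apply hbij.1
  rw [mlr_mul, mlr_mul, mlr_tf]
  ext x
  simp [mul_smul_comm, smul_mul_assoc]

lemma key_rmul (f : Module.Dual R ↥A₂) (a : ↥A₂) :
    tf hbij f * (a ⊗ₜ[R] (1 : (↥A₂)ᵐᵒᵖ))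
      = tf hbij ((f ∘ₗ LinearMap.mulLeft R a)) := by
  apply hbij.1
  rw [mlr_mul, mlr_tf, mlr_tf]
  ext x
  simp

lemma psiAct_tf_mem (f : Module.Dual R ↥A₂) (x : A₁) :
    psiAct A₂ (tf hbij f) x ∈ Subalgebra.centralizer R (A₂ : Set A₁) := by
  rw [Subalgebra.mem_centralizer_iff]
  rintro g hg
  lift g to ↥A₂ using hg
  calc (g : A₁) * psiAct A₂ (tf hbij f) x
      = psiAct A₂ ((g ⊗ₜ[R] (1 : (↥A₂)ᵐᵒᵖ)) * tf hbij f) x := by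
        rw [psiAct_mul]; simp
    _ = psiAct A₂ (((1:↥A₂) ⊗ₜ[R] MulOpposite.op g) * tf hbij f) x := by rw [key_swap]
    _ = psiAct A₂ (tf hbij f) x * g := by rw [psiAct_mul]; simp

lemma psiAct_tf_central {c : A₁} (hc : c ∈ Subalgebra.centralizer R (A₂ : Set A₁))
    (f : Module.Dual R ↥A₂) : psiAct A₂ (tf hbij f) c = f 1 • c := by
  rw [psiAct_central _ hc, mlr_tf]
  simp [smul_mul_assoc]

lemma psiAct_tf_mul_central {c : A₁} (hc : c ∈ Subalgebra.centralizer R (A₂ : Set A₁))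
    (f : Module.Dual R ↥A₂) (a : ↥A₂) :
    psiAct A₂ (tf hbij f) ((a : A₁) * c) = f a • c := by
  have : (a : A₁) * c = psiAct A₂ (a ⊗ₜ[R] (1 : (↥A₂)ᵐᵒᵖ)) c := by simp
  rw [this, ← Module.End.mul_apply, ← psiAct_mul, key_rmul,
    psiAct_tf_central hbij hc]
  simp

end TF

section Basis
variable (R M : Type*) [CommRing R] [AddCommGroup M] [Module R M]

lemma exists_dual_basis [Module.Finite R M] [Module.Projective R M] :
    ∃ (n : ℕ) (f : Fin n → Module.Dual R M) (a : Fin n → M),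
      ∀ x : M, ∑ i, f i x • a i = x := by
  obtain ⟨n, m, hm⟩ := Module.Finite.exists_fin (R := R) (M := M)
  set p : (Fin n → R) →ₗ[R] M :=
    LinearMap.lsum R (fun _ : Fin n => R) R (fun i => LinearMap.toSpanSingleton R M (m i)) with hp
  have hpapp : ∀ v : Fin n → R, p v = ∑ i, v i • m i := by
    intro v; simp [hp, LinearMap.lsum_apply, LinearMap.toSpanSingleton_apply]
  have hsurj : Function.Surjective p := by
    intro x
    have : x ∈ Submodule.span R (Set.range m) := by rw [hm]; trivial
    obtain ⟨c, hc⟩ := (Submodule.mem_span_range_iff_exists_fun R).1 this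
    exact ⟨c, by rw [hpapp]; exact hc⟩
  obtain ⟨h, hh⟩ := Module.projective_lifting_property p LinearMap.id hsurj
  refine ⟨n, fun i => (LinearMap.proj i) ∘ₗ h, m, fun x => ?_⟩
  have := LinearMap.congr_fun hh x
  simpa [hpapp] using this

lemma exists_generator [Module.Finite R M] [Module.Projective R M] [FaithfulSMul R M] :
    ∃ (n : ℕ) (g : Fin n → Module.Dual R M) (b : Fin n → M),
      ∑ j, g j (b j) = 1 := by
  obtain ⟨n, f, a, hfa⟩ := exists_dual_basis R M
  set S : Set R := Set.range (fun q : Module.Dual R M × M => q.1 q.2) with hS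
  set I : Ideal R := Ideal.span S with hI
  have htop : (⊤ : Submodule R M) ≤ I • ⊤ := by
    intro x _
    rw [← hfa x]
    refine Submodule.sum_mem _ fun i _ => Submodule.smul_mem_smul ?_ trivial
    exact Ideal.subset_span ⟨(f i, x), rfl⟩
  obtain ⟨r, hr1, hr0⟩ :=
    Submodule.exists_sub_one_mem_and_smul_eq_zero_of_fg_of_le_smul I ⊤
      Module.Finite.fg_top htop
  have hr : r = 0 := by
    refine eq_of_smul_eq_smul (M := R) (α := M) (fun x => ?_)
    rw [hr0 x trivial, zero_smul]
  have h1 : (1 : R) ∈ I := by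
    have : -(r - 1) ∈ I := neg_mem hr1
    simpa [hr] using this
  rw [hI, Ideal.span, Submodule.mem_span_set] at h1
  obtain ⟨c, hsupp, hsum⟩ := h1
  have hchoice : ∀ i : ↥c.support, ∃ q : Module.Dual R M × M, q.1 q.2 = (i : R) := by
    rintro ⟨i, hi⟩
    exact hsupp hi
  choose q hq using hchoice
  let e := (Fintype.equivFin ↥c.support).symm
  refine ⟨Fintype.card ↥c.support, fun j => c (e j) • (q (e j)).1, fun j => (q (e j)).2, ?_⟩
  have : ∑ j, (c (e j) • (q (e j)).1) (q (e j)).2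
      = ∑ i : ↥c.support, (c i • (q i).1) (q i).2 := Equiv.sum_comp e (fun i => (c i • (q i).1) (q i).2)
  rw [this]
  have : ∑ i : ↥c.support, (c i • (q i).1) (q i).2 = ∑ i : ↥c.support, c i • (i : R) := by
    refine Finset.sum_congr rfl fun i _ => ?_
    simp [hq i]
  rw [this]
  rw [← hsum]
  rw [Finsupp.sum]
  rw [← Finset.sum_attach c.support (fun i => c i • i)]
  rfl

end Basis

section HTH
variable (R M : Type*) [CommRing R] [AddCommGroup M] [Module R M]

lemma exists_split [Module.Finite R M] [Module.Projective R M] :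
    ∃ (n : ℕ) (i : M →ₗ[R] (Fin n → R)) (p : (Fin n → R) →ₗ[R] M),
      p ∘ₗ i = LinearMap.id := by
  obtain ⟨n, m, hm⟩ := Module.Finite.exists_fin (R := R) (M := M)
  set p : (Fin n → R) →ₗ[R] M :=
    LinearMap.lsum R (fun _ : Fin n => R) R (fun i => LinearMap.toSpanSingleton R M (m i)) with hp
  have hpapp : ∀ v : Fin n → R, p v = ∑ i, v i • m i := by
    intro v; simp [hp, LinearMap.lsum_apply, LinearMap.toSpanSingleton_apply]
  have hsurj : Function.Surjective p := by
    intro x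
    have : x ∈ Submodule.span R (Set.range m) := by rw [hm]; trivial
    obtain ⟨c, hc⟩ := (Submodule.mem_span_range_iff_exists_fun R).1 this
    exact ⟨c, by rw [hpapp]; exact hc⟩
  obtain ⟨h, hh⟩ := Module.projective_lifting_property p LinearMap.id hsurj
  exact ⟨n, h, p, hh⟩

variable (N : Type*) [AddCommGroup N] [Module R N]

theorem homTensorHomMap_bijective [Module.Finite R M] [Module.Projective R M]
    [Module.Finite R N] [Module.Projective R N] :
    Function.Bijective (TensorProduct.homTensorHomMap (RingHom.id R) M N M N) := by
  obtain ⟨m, iM, pM, hM⟩ := exists_split R M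
  obtain ⟨n, iN, pN, hN⟩ := exists_split R N
  set Rm := (Fin m → R)
  set Rn := (Fin n → R)
  -- conjugation maps
  set cM : Module.End R M →ₗ[R] Module.End R Rm :=
    (LinearMap.lcomp R Rm pM) ∘ₗ (LinearMap.llcomp R M M Rm iM) with hcM
  set cM' : Module.End R Rm →ₗ[R] Module.End R M :=
    (LinearMap.lcomp R M iM) ∘ₗ (LinearMap.llcomp R Rm Rm M pM) with hcM'
  set cN : Module.End R N →ₗ[R] Module.End R Rn :=
    (LinearMap.lcomp R Rn pN) ∘ₗ (LinearMap.llcomp R N N Rn iN) with hcN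
  set cN' : Module.End R Rn →ₗ[R] Module.End R N :=
    (LinearMap.lcomp R N iN) ∘ₗ (LinearMap.llcomp R Rn Rn N pN) with hcN'
  have hcMap : ∀ f, cM f = iM ∘ₗ f ∘ₗ pM := fun f => rfl
  have hcM'ap : ∀ f, cM' f = pM ∘ₗ f ∘ₗ iM := fun f => rfl
  have hcNap : ∀ g, cN g = iN ∘ₗ g ∘ₗ pN := fun g => rfl
  have hcN'ap : ∀ g, cN' g = pN ∘ₗ g ∘ₗ iN := fun g => rfl
  set α := TensorProduct.map cM cN with hα
  set β := TensorProduct.map cM' cN' with hβ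
  set φ := TensorProduct.homTensorHomMap (RingHom.id R) M N M N with hφ
  set φ' := TensorProduct.homTensorHomMap (RingHom.id R) Rm Rn Rm Rn with hφ'
  have hMx : ∀ x, pM (iM x) = x := fun x => by
    have := LinearMap.congr_fun hM x; simpa using this
  have hNx : ∀ x, pN (iN x) = x := fun x => by
    have := LinearMap.congr_fun hN x; simpa using this
  have hβα : ∀ z, β (α z) = z := by
    intro z
    induction z using TensorProduct.induction_on with
    | zero => rw [map_zero, map_zero]
    | add u v hu hv => simp [map_add, hu, hv]
    | tmul f g =>
      simp only [hα, hβ, TensorProduct.map_tmul]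
      congr 1
      · rw [hcM'ap, hcMap]; ext x
        simp [hMx]
      · rw [hcN'ap, hcNap]; ext x
        simp [hNx]
  have hnat : ∀ z, φ' (α z)
      = (TensorProduct.map iM iN) ∘ₗ (φ z) ∘ₗ (TensorProduct.map pM pN) := by
    intro z
    induction z using TensorProduct.induction_on with
    | zero => rw [map_zero, map_zero, map_zero]; simp
    | add u v hu hv => simp [map_add, hu, hv, LinearMap.add_comp, LinearMap.comp_add]
    | tmul f g =>
      simp only [hα, hφ, hφ', TensorProduct.map_tmul, TensorProduct.homTensorHomMap_apply,
        hcMap, hcNap]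
      rw [TensorProduct.map_comp, TensorProduct.map_comp]
  have hnat' : ∀ z, φ (β z)
      = (TensorProduct.map pM pN) ∘ₗ (φ' z) ∘ₗ (TensorProduct.map iM iN) := by
    intro z
    induction z using TensorProduct.induction_on with
    | zero => rw [map_zero, map_zero, map_zero]; simp
    | add u v hu hv => simp [map_add, hu, hv, LinearMap.add_comp, LinearMap.comp_add]
    | tmul f g =>
      simp only [hβ, hφ, hφ', TensorProduct.map_tmul, TensorProduct.homTensorHomMap_apply,
        hcM'ap, hcN'ap]
      rw [TensorProduct.map_comp, TensorProduct.map_comp]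
  have hpi : (TensorProduct.map pM pN) ∘ₗ (TensorProduct.map iM iN)
      = LinearMap.id := by
    rw [← TensorProduct.map_comp, hM, hN, TensorProduct.map_id]
  have hφ'bij : Function.Bijective φ' := by
    have : (φ' : (Module.End R Rm) ⊗[R] (Module.End R Rn) → (Rm ⊗[R] Rn →ₗ[R] Rm ⊗[R] Rn))
        = ⇑(homTensorHomEquiv R Rm Rn Rm Rn) := by
      funext x
      rw [homTensorHomEquiv_apply]
    rw [this]
    exact (homTensorHomEquiv R Rm Rn Rm Rn).bijective
  constructor
  · intro z₁ z₂ h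
    have : α z₁ = α z₂ := by
      apply hφ'bij.1
      rw [hnat, hnat, h]
    rw [← hβα z₁, ← hβα z₂, this]
  · intro F
    obtain ⟨w, hw⟩ := hφ'bij.2 ((TensorProduct.map iM iN) ∘ₗ F ∘ₗ (TensorProduct.map pM pN))
    refine ⟨β w, ?_⟩
    rw [hnat', hw]
    have hpix : ∀ y, TensorProduct.map pM pN (TensorProduct.map iM iN y) = y := by
      intro y
      rw [← LinearMap.comp_apply, hpi, LinearMap.id_apply]
    apply LinearMap.ext
    intro y
    simp only [LinearMap.comp_apply, hpix]

end HTH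

section Transport
variable {R B B' : Type*} [CommRing R] [Ring B] [Algebra R B] [Ring B'] [Algebra R B']

/-- Transport the Azumaya bijectivity condition along an algebra isomorphism. -/
lemma mlr_bijective_of_algEquiv (σ : B ≃ₐ[R] B')
    (h : Function.Bijective (mulLeftRightHom R B)) :
    Function.Bijective (mulLeftRightHom R B') := by
  set ρ : B' ⊗[R] B'ᵐᵒᵖ ≃ₗ[R] B ⊗[R] Bᵐᵒᵖ :=
    TensorProduct.congr σ.symm.toLinearEquiv
      (((MulOpposite.opLinearEquiv R (M := B')).symm ≪≫ₗ σ.symm.toLinearEquiv) ≪≫ₗ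
        MulOpposite.opLinearEquiv R (M := B)) with hρ
  have hcomp : ∀ (t' : B' ⊗[R] B'ᵐᵒᵖ) (x' : B'),
      mulLeftRightHom R B' t' x' = σ (mulLeftRightHom R B (ρ t') (σ.symm x')) := by
    intro t' x'
    induction t' using TensorProduct.induction_on with
    | zero => simp
    | add u v hu hv => simp [map_add, hu, hv]
    | tmul b c =>
      simp [hρ, TensorProduct.congr_tmul, mul_assoc]
  constructor
  · intro t₁ t₂ ht
    have : mulLeftRightHom R B (ρ t₁) = mulLeftRightHom R B (ρ t₂) := by
      ext y
      have h1 := hcomp t₁ (σ y)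
      have h2 := hcomp t₂ (σ y)
      rw [ht] at h1
      have h3 : σ ((mulLeftRightHom R B (ρ t₁)) (σ.symm (σ y)))
          = σ ((mulLeftRightHom R B (ρ t₂)) (σ.symm (σ y))) := by rw [← h1, ← h2]
      simpa using σ.injective h3
    have := h.1 this
    exact ρ.injective this
  · intro F'
    obtain ⟨t, ht⟩ := h.2 (σ.symm.toLinearMap ∘ₗ (F' : B' →ₗ[R] B') ∘ₗ σ.toLinearMap)
    refine ⟨ρ.symm t, ?_⟩
    ext x'
    rw [hcomp (ρ.symm t) x', ρ.apply_symm_apply, ht]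
    simp

end Transport

section Factor
variable (R B C : Type*) [CommRing R] [Ring B] [Algebra R B] [Ring C] [Algebra R C]

/-- The shuffle `(B ⊗ C) ⊗ (B ⊗ C)ᵐᵒᵖ ≃ (B ⊗ Bᵐᵒᵖ) ⊗ (C ⊗ Cᵐᵒᵖ)`. -/
noncomputable def shuffleEquiv :
    ((B ⊗[R] C) ⊗[R] (B ⊗[R] C)ᵐᵒᵖ) ≃ₗ[R] ((B ⊗[R] Bᵐᵒᵖ) ⊗[R] (C ⊗[R] Cᵐᵒᵖ)) :=
  (TensorProduct.congr (LinearEquiv.refl R (B ⊗[R] C))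
      ((MulOpposite.opLinearEquiv R (M := B ⊗[R] C)).symm ≪≫ₗ
        TensorProduct.congr (MulOpposite.opLinearEquiv R (M := B))
          (MulOpposite.opLinearEquiv R (M := C)))) ≪≫ₗ
    TensorProduct.tensorTensorTensorComm R B C Bᵐᵒᵖ Cᵐᵒᵖ

@[simp] lemma shuffleEquiv_tmul (b : B) (c : C) (b' : B) (c' : C) :
    shuffleEquiv R B C ((b ⊗ₜ[R] c) ⊗ₜ[R] MulOpposite.op (b' ⊗ₜ[R] c'))
      = (b ⊗ₜ[R] MulOpposite.op b') ⊗ₜ[R] (c ⊗ₜ[R] MulOpposite.op c') := by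
  simp [shuffleEquiv]

lemma mlr_tensor_factor (t : (B ⊗[R] C) ⊗[R] (B ⊗[R] C)ᵐᵒᵖ) :
    mulLeftRightHom R (B ⊗[R] C) t
      = TensorProduct.homTensorHomMap (RingHom.id R) B C B C
          ((TensorProduct.map (mulLeftRightHom R B) (mulLeftRightHom R C))
            (shuffleEquiv R B C t)) := by
  induction t using TensorProduct.induction_on with
  | zero => simp
  | add u v hu hv => simp [map_add, hu, hv]
  | tmul z w =>
    rw [← MulOpposite.op_unop w]
    generalize MulOpposite.unop w = w'
    induction w' using TensorProduct.induction_on with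
    | zero => simp
    | add u' v' hu' hv' =>
      rw [MulOpposite.op_add, TensorProduct.tmul_add, map_add, map_add, hu', hv', ← map_add, ← map_add]
    | tmul b' c' =>
      induction z using TensorProduct.induction_on with
      | zero => simp
      | add u'' v'' hu'' hv'' =>
        rw [TensorProduct.add_tmul, map_add, map_add, hu'', hv'', ← map_add, ← map_add]
      | tmul b c =>
        apply TensorProduct.ext'
        intro x y
        simp [Algebra.TensorProduct.tmul_mul_tmul, mul_assoc]

end Factor


/-- If `A₂ ⊆ A₁` are Azumaya algebras over `R`, then the commutant `A₁^{A₂}` is an Azumaya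
algebra over `R` and the multiplication map `A₂ ⊗_R A₁^{A₂} → A₁` is an isomorphism. -/
theorem azumaya_commutant {R A₁ : Type*} [CommRing R] [Ring A₁] [Algebra R A₁]
    (h₁ : IsAzumaya' R A₁) (A₂ : Subalgebra R A₁) (h₂ : IsAzumaya' R A₂) :
    IsAzumaya' R (Subalgebra.centralizer R (A₂ : Set A₁)) ∧
    Function.Bijective
      (Algebra.TensorProduct.lift A₂.val (Subalgebra.centralizer R (A₂ : Set A₁)).val
        (fun x y => y.2 x.1 x.2)) := by
  obtain ⟨hfin1, hproj1, hfaith1, hbij1⟩ := h₁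
  obtain ⟨hfin2, hproj2, hfaith2, hbij2⟩ := h₂
  haveI := hfin1; haveI := hproj1; haveI := hfaith1
  haveI := hfin2; haveI := hproj2; haveI := hfaith2
  set C := Subalgebra.centralizer R (A₂ : Set A₁) with hC
  set mAlg := Algebra.TensorProduct.lift A₂.val C.val (fun x y => y.2 x.1 x.2) with hmAlg
  obtain ⟨n, f, a, hfa⟩ := exists_dual_basis R ↥A₂
  obtain ⟨N, gg, bb, hgb⟩ := exists_generator R ↥A₂
  have hmem : ∀ (fj : Module.Dual R ↥A₂) (x : A₁), psiAct A₂ (tf hbij2 fj) x ∈ C :=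
    fun fj x => psiAct_tf_mem hbij2 fj x
  -- the inverse of the multiplication map
  set gmap : A₁ →ₗ[R] ↥A₂ ⊗[R] ↥C :=
    { toFun := fun x => ∑ i, a i ⊗ₜ[R] (⟨psiAct A₂ (tf hbij2 (f i)) x, hmem (f i) x⟩ : ↥C)
      map_add' := by
        intro x y
        rw [← Finset.sum_add_distrib]
        refine Finset.sum_congr rfl fun i _ => ?_
        rw [← TensorProduct.tmul_add]
        congr 1
        apply Subtype.ext
        simp
      map_smul' := by
        intro r x
        simp only [RingHom.id_apply]
        rw [Finset.smul_sum]
        refine Finset.sum_congr rfl fun i _ => ?_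
        rw [← TensorProduct.tmul_smul]
        congr 1
        apply Subtype.ext
        simp } with hgmap
  have hone : (∑ i, (a i ⊗ₜ[R] (1 : (↥A₂)ᵐᵒᵖ)) * tf hbij2 (f i)) = 1 := by
    apply hbij2.1
    rw [map_sum, mlr_one]
    have hterm : ∀ (i : Fin n) (x : ↥A₂),
        mulLeftRightHom R ↥A₂ ((a i ⊗ₜ[R] (1:(↥A₂)ᵐᵒᵖ)) * tf hbij2 (f i)) x
          = f i x • a i := by
      intro i x
      rw [mlr_mul, Module.End.mul_apply, mlr_tf]
      simp [mul_smul_comm]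
    ext x
    rw [LinearMap.sum_apply]
    rw [Finset.sum_congr rfl fun i _ => hterm i x, hfa]
    simp
  have hm1 : ∀ x : A₁, mAlg (gmap x) = x := by
    intro x
    have hgx : gmap x = ∑ i, a i ⊗ₜ[R] (⟨psiAct A₂ (tf hbij2 (f i)) x, hmem (f i) x⟩ : ↥C) := rfl
    rw [hgx, map_sum]
    have hterm : ∀ i : Fin n,
        mAlg (a i ⊗ₜ[R] (⟨psiAct A₂ (tf hbij2 (f i)) x, hmem (f i) x⟩ : ↥C))
          = psiAct A₂ ((a i ⊗ₜ[R] (1:(↥A₂)ᵐᵒᵖ)) * tf hbij2 (f i)) x := by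
      intro i
      rw [hmAlg]; refine (Algebra.TensorProduct.lift_tmul ..).trans ?_; rw [psiAct_mul, Module.End.mul_apply]
      simp
    rw [Finset.sum_congr rfl fun i _ => hterm i]
    have : ∑ i, psiAct A₂ ((a i ⊗ₜ[R] (1:(↥A₂)ᵐᵒᵖ)) * tf hbij2 (f i)) x
        = psiAct A₂ (∑ i, (a i ⊗ₜ[R] (1:(↥A₂)ᵐᵒᵖ)) * tf hbij2 (f i)) x := by
      rw [map_sum, LinearMap.sum_apply]
    rw [this, hone, psiAct_one]
    rfl
  have hm2 : ∀ z : ↥A₂ ⊗[R] ↥C, gmap (mAlg z) = z := by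
    intro z
    induction z using TensorProduct.induction_on with
    | zero => simp
    | add u v hu hv => simp [map_add, hu, hv]
    | tmul u c =>
      have hc : (c : A₁) ∈ Subalgebra.centralizer R (A₂ : Set A₁) := c.2
      have hval : mAlg (u ⊗ₜ[R] c) = (u : A₁) * (c : A₁) := by
        rw [hmAlg]; exact Algebra.TensorProduct.lift_tmul ..
      rw [hval]
      have hgx : gmap ((u : A₁) * (c : A₁)) = ∑ i, a i ⊗ₜ[R]
          (⟨psiAct A₂ (tf hbij2 (f i)) ((u : A₁) * (c : A₁)), hmem _ _⟩ : ↥C) := rfl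
      rw [hgx]
      have h1 : ∀ i : Fin n, a i ⊗ₜ[R]
          (⟨psiAct A₂ (tf hbij2 (f i)) ((u : A₁) * (c : A₁)), hmem _ _⟩ : ↥C)
            = (f i u • a i) ⊗ₜ[R] c := by
        intro i
        have h2 : (⟨psiAct A₂ (tf hbij2 (f i)) ((u : A₁) * (c : A₁)), hmem _ _⟩ : ↥C)
            = f i u • c := by
          apply Subtype.ext
          simp [psiAct_tf_mul_central hbij2 hc (f i) u]
        rw [h2, TensorProduct.tmul_smul, TensorProduct.smul_tmul']
      rw [Finset.sum_congr rfl fun i _ => h1 i, ← TensorProduct.sum_tmul, hfa]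
  have hmbij : Function.Bijective mAlg :=
    ⟨fun z z' h => by rw [← hm2 z, ← hm2 z', h], fun x => ⟨gmap x, hm1 x⟩⟩
  -- transport the Azumaya property of A₁ to A₂ ⊗ C
  have hAzuT : Function.Bijective (mulLeftRightHom R (↥A₂ ⊗[R] ↥C)) :=
    mlr_bijective_of_algEquiv (AlgEquiv.ofBijective mAlg hmbij).symm hbij1
  -- the projection onto the centralizer
  set π₀ : Module.End R A₁ :=
    ∑ j, psiAct A₂ (tf hbij2 ((gg j) ∘ₗ LinearMap.mulLeft R (bb j))) with hπ₀
  have hπ₀mem : ∀ x : A₁, π₀ x ∈ Subalgebra.toSubmodule C := by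
    intro x
    rw [hπ₀, LinearMap.sum_apply]
    exact Submodule.sum_mem _ fun j _ => hmem _ x
  have hπ₀fix : ∀ c : ↥C, π₀ (c : A₁) = c := by
    intro c
    rw [hπ₀, LinearMap.sum_apply]
    have hterm : ∀ j, psiAct A₂ (tf hbij2 ((gg j) ∘ₗ LinearMap.mulLeft R (bb j))) (c : A₁)
        = gg j (bb j) • (c : A₁) := by
      intro j
      rw [psiAct_tf_central hbij2 c.2]
      simp
    rw [Finset.sum_congr rfl fun j _ => hterm j, ← Finset.sum_smul, hgb, one_smul]
  set π : A₁ →ₗ[R] ↥C := LinearMap.codRestrict (Subalgebra.toSubmodule C) π₀ hπ₀mem with hπ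
  have hπc : ∀ c : ↥C, π (c : A₁) = c := by
    intro c
    apply Subtype.ext
    exact hπ₀fix c
  haveI hfinC : Module.Finite R ↥C :=
    Module.Finite.of_surjective π (fun c => ⟨(c : A₁), hπc c⟩)
  haveI hprojC : Module.Projective R ↥C := by
    refine Module.Projective.of_split (Subalgebra.toSubmodule C).subtype π ?_
    ext c
    exact congrArg Subtype.val (hπc c)
  haveI hfaithC : FaithfulSMul R ↥C := by
    constructor
    intro r s h
    have h1 := h 1
    have h1' : r • (1 : A₁) = s • (1 : A₁) := by
      have := congrArg Subtype.val h1
      simpa using this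
    refine FaithfulSMul.eq_of_smul_eq_smul (M := R) (α := A₁) (fun x => ?_)
    calc r • x = (r • (1 : A₁)) * x := by rw [smul_mul_assoc, one_mul]
      _ = (s • (1 : A₁)) * x := by rw [h1']
      _ = s • x := by rw [smul_mul_assoc, one_mul]
  -- bijectivity of the tensor of the two structure maps
  have hΞ := homTensorHomMap_bijective R ↥A₂ ↥C
  have hfact := mlr_tensor_factor R ↥A₂ ↥C
  have hmapbij : Function.Bijective
      (TensorProduct.map (mulLeftRightHom R ↥A₂) (mulLeftRightHom R ↥C)) := by
    constructor
    · intro u v huv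
      have h1 : mulLeftRightHom R (↥A₂ ⊗[R] ↥C) ((shuffleEquiv R ↥A₂ ↥C).symm u)
          = mulLeftRightHom R (↥A₂ ⊗[R] ↥C) ((shuffleEquiv R ↥A₂ ↥C).symm v) := by
        rw [hfact, hfact, LinearEquiv.apply_symm_apply, LinearEquiv.apply_symm_apply, huv]
      have h2 := hAzuT.1 h1
      have h3 := congrArg (shuffleEquiv R ↥A₂ ↥C) h2
      simpa using h3
    · intro y
      obtain ⟨t, ht⟩ := hAzuT.2 (TensorProduct.homTensorHomMap (RingHom.id R) ↥A₂ ↥C ↥A₂ ↥C y)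
      refine ⟨shuffleEquiv R ↥A₂ ↥C t, ?_⟩
      apply hΞ.1
      rw [← hfact, ht]
  -- remove the A₂ factor using a retraction of End(A₂) onto R
  set W := Module.End R ↥A₂
  set E1 : (↥A₂ ⊗[R] (↥A₂)ᵐᵒᵖ) ⊗[R] (↥C ⊗[R] (↥C)ᵐᵒᵖ) ≃ₗ[R] W ⊗[R] (↥C ⊗[R] (↥C)ᵐᵒᵖ) :=
    TensorProduct.congr (ephi hbij2) (LinearEquiv.refl R (↥C ⊗[R] (↥C)ᵐᵒᵖ)) with hE1
  have hlt : ∀ y : W ⊗[R] (↥C ⊗[R] (↥C)ᵐᵒᵖ),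
      LinearMap.lTensor W (mulLeftRightHom R ↥C) y
        = TensorProduct.map (mulLeftRightHom R ↥A₂) (mulLeftRightHom R ↥C) (E1.symm y) := by
    intro y
    induction y using TensorProduct.induction_on with
    | zero =>
      rw [map_zero]
      have h0 : E1.symm (0 : W ⊗[R] (↥C ⊗[R] (↥C)ᵐᵒᵖ)) = 0 := E1.symm.toLinearMap.map_zero
      rw [h0, map_zero]
    | add u v hu hv => simp [map_add, hu, hv]
    | tmul h z =>
      rw [hE1]
      rw [TensorProduct.congr_symm_tmul]
      simp only [LinearEquiv.refl_symm, LinearEquiv.refl_apply, TensorProduct.map_tmul,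
        LinearMap.lTensor_tmul]
      congr 1
      show h = (ephi hbij2) ((ephi hbij2).symm h)
      rw [LinearEquiv.apply_symm_apply]
  have hltbij : Function.Bijective (LinearMap.lTensor W (mulLeftRightHom R ↥C)) := by
    constructor
    · intro u v huv
      rw [hlt, hlt] at huv
      have := hmapbij.1 huv
      have := congrArg E1 this
      simpa using this
    · intro y
      obtain ⟨t, ht⟩ := hmapbij.2 y
      exact ⟨E1 t, by rw [hlt]; simpa using ht⟩
  set lam : W →ₗ[R] R := ∑ j, (gg j) ∘ₗ (LinearMap.applyₗ (bb j)) with hlam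
  have hlam1 : lam 1 = 1 := by
    rw [hlam, LinearMap.sum_apply]
    exact hgb
  set contr : W ⊗[R] (↥C ⊗[R] (↥C)ᵐᵒᵖ) →ₗ[R] (↥C ⊗[R] (↥C)ᵐᵒᵖ) :=
    (TensorProduct.lid R _).toLinearMap ∘ₗ TensorProduct.map lam LinearMap.id with hcontr
  set contr' : W ⊗[R] (Module.End R ↥C) →ₗ[R] Module.End R ↥C :=
    (TensorProduct.lid R _).toLinearMap ∘ₗ TensorProduct.map lam LinearMap.id with hcontr'
  have hcontr_tmul : ∀ (h : W) (z : ↥C ⊗[R] (↥C)ᵐᵒᵖ), contr (h ⊗ₜ[R] z) = lam h • z := by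
    intro h z
    rw [hcontr]
    simp
  have hcontr'_tmul : ∀ (h : W) (k : Module.End R ↥C), contr' (h ⊗ₜ[R] k) = lam h • k := by
    intro h k
    rw [hcontr']
    simp
  have hnatC : ∀ y : W ⊗[R] (↥C ⊗[R] (↥C)ᵐᵒᵖ),
      mulLeftRightHom R ↥C (contr y) = contr' (LinearMap.lTensor W (mulLeftRightHom R ↥C) y) := by
    intro y
    induction y using TensorProduct.induction_on with
    | zero => simp
    | add u v hu hv => simp [map_add, hu, hv]
    | tmul h z =>
      rw [LinearMap.lTensor_tmul, hcontr_tmul, hcontr'_tmul, map_smul]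
  have hφCbij : Function.Bijective (mulLeftRightHom R ↥C) := by
    constructor
    · intro z z' hzz
      have h1 : LinearMap.lTensor W (mulLeftRightHom R ↥C) ((1 : W) ⊗ₜ[R] z)
          = LinearMap.lTensor W (mulLeftRightHom R ↥C) ((1 : W) ⊗ₜ[R] z') := by
        rw [LinearMap.lTensor_tmul, LinearMap.lTensor_tmul, hzz]
      have h2 := hltbij.1 h1
      have h3 := congrArg contr h2
      rw [hcontr_tmul, hcontr_tmul, hlam1, one_smul, one_smul] at h3
      exact h3
    · intro k
      obtain ⟨y, hy⟩ := hltbij.2 ((1 : W) ⊗ₜ[R] k)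
      refine ⟨contr y, ?_⟩
      rw [hnatC, hy, hcontr'_tmul, hlam1, one_smul]
  exact ⟨⟨hfinC, hprojC, hfaithC, hφCbij⟩, hmbij⟩
end

section
/- For any prime ideal 𝔭 of a commutative ring R and any Azumaya algebra A over R, the rank of the free R_𝔭-module A_𝔭 is a perfect square. -/
open scoped TensorProduct

namespace AzumayaSquareAux

section MLR

variable {R A : Type*} [CommRing R] [Ring A] [Algebra R A]

lemma mlr_tmul (a : A) (b : Aᵐᵒᵖ) (x : A) :
    mulLeftRightHom R A (a ⊗ₜ[R] b) x = a * x * b.unop := by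
  simp [mulLeftRightHom, mul_assoc]

lemma mlr_mul_left (a : A) (t : A ⊗[R] Aᵐᵒᵖ) :
    mulLeftRightHom R A ((a ⊗ₜ[R] (1 : Aᵐᵒᵖ)) * t)
      = (LinearMap.mulLeft R a) ∘ₗ mulLeftRightHom R A t := by
  induction t using TensorProduct.induction_on with
  | zero => simp
  | tmul u v =>
    rw [Algebra.TensorProduct.tmul_mul_tmul]
    ext x
    simp [mlr_tmul, mul_assoc]
  | add t₁ t₂ h₁ h₂ =>
    rw [mul_add, map_add, map_add, h₁, h₂]
    ext x
    simp [mul_add]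

lemma mlr_mul_right (b : A) (t : A ⊗[R] Aᵐᵒᵖ) :
    mulLeftRightHom R A (((1 : A) ⊗ₜ[R] MulOpposite.op b) * t)
      = (LinearMap.mulRight R b) ∘ₗ mulLeftRightHom R A t := by
  induction t using TensorProduct.induction_on with
  | zero => simp
  | tmul u v =>
    rw [Algebra.TensorProduct.tmul_mul_tmul]
    ext x
    simp [mlr_tmul, mul_assoc]
  | add t₁ t₂ h₁ h₂ =>
    rw [mul_add, map_add, map_add, h₁, h₂]
    ext x
    simp [add_mul]

end MLR

end AzumayaSquareAux

namespace AzumayaSquareAux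

section DualHelpers

variable {K V : Type*} [Field K] [AddCommGroup V] [Module K V]

theorem exists_dual_eq_one {x : V} (hx : x ≠ 0) : ∃ φ : V →ₗ[K] K, φ x = 1 := by
  obtain ⟨q, hq⟩ := (K ∙ x).exists_isCompl
  refine ⟨((LinearEquiv.toSpanNonzeroSingleton K V x hx).symm :
      (K ∙ x) →ₗ[K] K).comp (Submodule.linearProjOfIsCompl _ q hq), ?_⟩
  have h1 : (Submodule.linearProjOfIsCompl _ q hq) x
      = ⟨x, Submodule.mem_span_singleton_self x⟩ :=
    Submodule.linearProjOfIsCompl_apply_left hq ⟨x, Submodule.mem_span_singleton_self x⟩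
  rw [LinearMap.comp_apply, h1]
  rw [show ((LinearEquiv.toSpanNonzeroSingleton K V x hx).symm :
      (K ∙ x) →ₗ[K] K) = (LinearEquiv.toSpanNonzeroSingleton K V x hx).symm.toLinearMap from rfl]
  rw [LinearEquiv.coe_coe, LinearEquiv.symm_apply_eq]
  apply Subtype.ext
  simp [LinearEquiv.toSpanNonzeroSingleton]

theorem exists_end_apply_eq {x : V} (hx : x ≠ 0) (y : V) : ∃ f : Module.End K V, f x = y := by
  obtain ⟨φ, hφ⟩ := exists_dual_eq_one (K := K) hx
  exact ⟨(LinearMap.toSpanSingleton K V y).comp φ,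
    by simp [LinearMap.toSpanSingleton_apply, hφ]⟩

end DualHelpers

section Bistable

variable {K C : Type*} [Field K] [Ring C] [Algebra K C]

lemma mlr_apply_mem (W : Submodule K C)
    (hL : ∀ a x : C, x ∈ W → a * x ∈ W) (hR : ∀ b x : C, x ∈ W → x * b ∈ W)
    {x : C} (hx : x ∈ W) (t : C ⊗[K] Cᵐᵒᵖ) : mulLeftRightHom K C t x ∈ W := by
  induction t using TensorProduct.induction_on with
  | zero => simp
  | tmul a b => rw [mlr_tmul]; exact hR _ _ (hL _ _ hx)
  | add t₁ t₂ h₁ h₂ => rw [map_add, LinearMap.add_apply]; exact W.add_mem h₁ h₂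

lemma eq_top_of_bistable (hs : Function.Surjective (mulLeftRightHom K C))
    (W : Submodule K C)
    (hL : ∀ a x : C, x ∈ W → a * x ∈ W) (hR : ∀ b x : C, x ∈ W → x * b ∈ W)
    (hW : W ≠ ⊥) : W = ⊤ := by
  obtain ⟨x, hxW, hx0⟩ := Submodule.ne_bot_iff W |>.mp hW
  rw [Submodule.eq_top_iff']
  intro y
  obtain ⟨f, hf⟩ := exists_end_apply_eq (K := K) hx0 y
  obtain ⟨t, ht⟩ := hs f
  have := mlr_apply_mem W hL hR hxW t
  rwa [ht, hf] at this

end Bistable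

end AzumayaSquareAux

namespace AzumayaSquareAux

section Semisimple

variable {K C : Type*} [Field K] [Ring C] [Algebra K C]

theorem isSemisimpleRing_of_bijective [Nontrivial C]
    (hb : Function.Bijective (mulLeftRightHom K C)) : IsSemisimpleRing C := by
  obtain ⟨φ, hφ⟩ := exists_dual_eq_one (K := K) (one_ne_zero (α := C))
  set s₁ : Module.End K C := (LinearMap.toSpanSingleton K C 1).comp φ with hs₁def
  have hs₁apply : ∀ x, s₁ x = φ x • 1 := fun x => by
    simp [hs₁def, LinearMap.toSpanSingleton_apply]
  obtain ⟨e, he⟩ := hb.2 s₁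
  have hcomm : ∀ a : C, (a ⊗ₜ[K] (1 : Cᵐᵒᵖ)) * e = ((1 : C) ⊗ₜ[K] MulOpposite.op a) * e := by
    intro a
    apply hb.1
    rw [mlr_mul_left, mlr_mul_right, he]
    ext x
    simp [hs₁apply, smul_mul_assoc, mul_smul_comm]
  refine { toComplementedLattice := ⟨?_⟩ }
  intro I
  obtain ⟨q, hq⟩ := (I.restrictScalars K).exists_isCompl
  set π : C →ₗ[K] C :=
    (I.restrictScalars K).subtype.comp (Submodule.linearProjOfIsCompl _ q hq) with hπdef
  have hπmem : ∀ c, π c ∈ I := fun c => ((Submodule.linearProjOfIsCompl _ q hq) c).2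
  have hπid : ∀ c ∈ I, π c = c := by
    intro c hc
    have h1 := Submodule.linearProjOfIsCompl_apply_left hq
      (⟨c, hc⟩ : I.restrictScalars K)
    simp only [hπdef, LinearMap.comp_apply]
    rw [show (Submodule.linearProjOfIsCompl _ q hq) c = ⟨c, hc⟩ from h1]
    rfl
  set Θ : C ⊗[K] Cᵐᵒᵖ →ₗ[K] C →ₗ[K] C := TensorProduct.lift (LinearMap.mk₂ K
      (fun u v => (LinearMap.mulLeft K u) ∘ₗ π ∘ₗ (LinearMap.mulLeft K v.unop))
      (fun u u' v => by ext x; simp [add_mul])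
      (fun k u v => by ext x; simp [smul_mul_assoc])
      (fun u v v' => by ext x; simp [add_mul, mul_add])
      (fun k u v => by ext x; simp [smul_mul_assoc, mul_smul_comm])) with hΘdef
  have hΘtmul : ∀ (u : C) (v : Cᵐᵒᵖ) (c : C), Θ (u ⊗ₜ[K] v) c = u * π (v.unop * c) :=
    fun u v c => by simp [hΘdef]
  have hΘmem : ∀ t c, Θ t c ∈ I := by
    intro t c
    induction t using TensorProduct.induction_on with
    | zero => simp
    | tmul u v =>
      rw [hΘtmul]
      simpa [smul_eq_mul] using I.smul_mem u (hπmem (v.unop * c))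
    | add t₁ t₂ h₁ h₂ => rw [map_add, LinearMap.add_apply]; exact I.add_mem h₁ h₂
  have hΘid : ∀ t, ∀ c ∈ I, Θ t c = (mulLeftRightHom K C t) 1 * c := by
    intro t c hc
    induction t using TensorProduct.induction_on with
    | zero => simp
    | tmul u v =>
      rw [hΘtmul, mlr_tmul]
      have hmem : v.unop * c ∈ I := by
        simpa [smul_eq_mul] using I.smul_mem v.unop hc
      rw [hπid _ hmem, mul_one, mul_assoc]
    | add t₁ t₂ h₁ h₂ =>
      rw [map_add, LinearMap.add_apply, h₁, h₂, map_add, LinearMap.add_apply, add_mul]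
  have hΘL : ∀ (a : C) t c, Θ ((a ⊗ₜ[K] (1 : Cᵐᵒᵖ)) * t) c = a * Θ t c := by
    intro a t c
    induction t using TensorProduct.induction_on with
    | zero => simp
    | tmul u v =>
      rw [Algebra.TensorProduct.tmul_mul_tmul, one_mul, hΘtmul, hΘtmul, mul_assoc]
    | add t₁ t₂ h₁ h₂ =>
      rw [mul_add, map_add, LinearMap.add_apply, h₁, h₂, map_add, LinearMap.add_apply,
        mul_add]
  have hΘR : ∀ (a : C) t c, Θ (((1 : C) ⊗ₜ[K] MulOpposite.op a) * t) c = Θ t (a * c) := by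
    intro a t c
    induction t using TensorProduct.induction_on with
    | zero => simp
    | tmul u v =>
      rw [Algebra.TensorProduct.tmul_mul_tmul, one_mul, hΘtmul, hΘtmul]
      simp [mul_assoc]
    | add t₁ t₂ h₁ h₂ =>
      rw [mul_add, map_add, LinearMap.add_apply, h₁, h₂, map_add, LinearMap.add_apply]
  set Pr : C →ₗ[C] C :=
    { toFun := fun c => Θ e c
      map_add' := fun c₁ c₂ => map_add (Θ e) c₁ c₂
      map_smul' := by
        intro a c
        show Θ e (a • c) = a • Θ e c
        rw [smul_eq_mul, smul_eq_mul, ← hΘR a e c, ← hcomm a, hΘL] } with hPrdef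
  have hmem' : ∀ c, Pr c ∈ I := fun c => hΘmem e c
  have hid' : ∀ c ∈ I, Pr c = c := by
    intro c hc
    show Θ e c = c
    rw [hΘid e c hc, he, hs₁apply, hφ, one_smul, one_mul]
  refine ⟨LinearMap.ker Pr, ?_, ?_⟩
  · rw [disjoint_iff_inf_le]
    rintro c ⟨hcI, hck⟩
    have h0 : Pr c = 0 := hck
    have := hid' c hcI
    rw [h0] at this
    simpa using this.symm
  · rw [codisjoint_iff_le_sup]
    intro c _
    have hsplit : c = Pr c + (c - Pr c) := by abel
    have hker : c - Pr c ∈ LinearMap.ker Pr := by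
      rw [LinearMap.mem_ker, map_sub, hid' _ (hmem' c), sub_self]
    rw [hsplit]
    exact Submodule.add_mem_sup (hmem' c) hker

end Semisimple

end AzumayaSquareAux

namespace AzumayaSquareAux

section FieldMain

variable {K C : Type*} [Field K] [Ring C] [Algebra K C]

/-- right multiplication as a `C`-linear endomorphism of `C`. -/
def rmulC (b : C) : C →ₗ[C] C where
  toFun x := x * b
  map_add' x y := add_mul x y b
  map_smul' a x := by simp [smul_eq_mul, mul_assoc]

theorem finrank_eq_sq_of_surjective [IsAlgClosed K] [FiniteDimensional K C]
    (hs : Function.Surjective (mulLeftRightHom K C)) :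
    ∃ n : ℕ, Module.finrank K C = n ^ 2 := by
  classical
  rcases subsingleton_or_nontrivial C with hC | hC
  · exact ⟨0, by simp [Module.finrank_zero_of_subsingleton]⟩
  -- the sandwich map is bijective
  have hdim : Module.finrank K (C ⊗[K] Cᵐᵒᵖ) = Module.finrank K (Module.End K C) := by
    rw [Module.finrank_tensorProduct, Module.finrank_linearMap,
      ← (MulOpposite.opLinearEquiv K (M := C)).finrank_eq]
  have hb : Function.Bijective (mulLeftRightHom K C) :=
    ⟨(LinearMap.injective_iff_surjective_of_finrank_eq_finrank hdim).mpr hs, hs⟩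
  haveI hss : IsSemisimpleRing C := isSemisimpleRing_of_bijective hb
  haveI : IsNoetherian C C := isNoetherian_of_tower K inferInstance
  obtain ⟨s, hind, hsup, hsimp⟩ :=
    IsSemisimpleModule.exists_sSupIndep_sSup_simples_eq_top C C
  have hsfin : s.Finite := WellFoundedGT.finite_of_sSupIndep hind
  haveI : Fintype s := hsfin.fintype
  have hsne : s.Nonempty := by
    rcases Set.eq_empty_or_nonempty s with h | h
    · exfalso
      rw [h, sSup_empty] at hsup
      exact bot_ne_top (α := Submodule C C) hsup
    · exact h
  obtain ⟨S₀, hS₀s⟩ := hsne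
  haveI hS₀simple : IsSimpleModule C S₀ := hsimp S₀ hS₀s
  have hS₀ne : S₀ ≠ ⊥ := (isSimpleModule_iff_isAtom.mp hS₀simple).1
  -- the isotypic component of S₀ is everything
  have hTtop : sSup {N' : Submodule C C | Nonempty (N' ≃ₗ[C] S₀)} = ⊤ := by
    set isoSet : Set (Submodule C C) := {N' | Nonempty (N' ≃ₗ[C] S₀)} with hisoSet
    set T : Submodule C C := sSup isoSet with hTdef
    have hRstab : ∀ b : C, ∀ x ∈ T, x * b ∈ T := by
      intro b x hx
      have hmap : Submodule.map (rmulC b) T ≤ T := by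
        rw [hTdef, sSup_eq_iSup', Submodule.map_iSup]
        apply iSup_le
        rintro ⟨N', hN'⟩
        obtain ⟨eN⟩ := hN'
        haveI : IsSimpleModule C N' := IsSimpleModule.congr eN
        set f : N' →ₗ[C] C := (rmulC b).comp N'.subtype with hf
        have hrange : Submodule.map (rmulC b) N' = LinearMap.range f := by
          rw [hf, LinearMap.range_comp, Submodule.range_subtype]
        rcases eq_bot_or_eq_top (LinearMap.ker f) with h | h
        · have hinj : Function.Injective f := LinearMap.ker_eq_bot.mp h
          have hmem : LinearMap.range f ∈ isoSet :=
            ⟨(LinearEquiv.ofInjective f hinj).symm.trans eN⟩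
          rw [hrange]
          exact le_sSup ⟨⟨LinearMap.range f, hmem⟩, rfl⟩
        · have hf0 : f = 0 := LinearMap.ker_eq_top.mp h
          rw [hrange, hf0, LinearMap.range_zero]
          exact bot_le
      exact hmap ⟨x, hx, rfl⟩
    have hW := eq_top_of_bistable hs (T.restrictScalars K)
      (fun a x hx => by
        have : a • x ∈ T := T.smul_mem a hx
        simpa [smul_eq_mul] using this)
      (fun b x hx => hRstab b x hx)
      (by
        intro hbot
        have hS₀T : S₀ ≤ T := le_sSup ⟨LinearEquiv.refl C S₀⟩
        rw [Submodule.restrictScalars_eq_bot_iff] at hbot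
        rw [hbot, le_bot_iff] at hS₀T
        exact hS₀ne hS₀T)
    rw [Submodule.eq_top_iff']
    intro x
    have : x ∈ T.restrictScalars K := by rw [hW]; trivial
    exact this
  -- every simple constituent is isomorphic to S₀
  have hiso : ∀ N ∈ s, Nonempty ((N : Submodule C C) ≃ₗ[C] S₀) := by
    intro N hN
    haveI : IsSimpleModule C N := hsimp N hN
    obtain ⟨J, hJ⟩ := ComplementedLattice.exists_isCompl N
    set πN : C →ₗ[C] N := Submodule.linearProjOfIsCompl N J hJ with hπN
    have hNne : N ≠ ⊥ := (isSimpleModule_iff_isAtom.mp ‹IsSimpleModule C N›).1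
    have hker : ¬ (sSup {N' : Submodule C C | Nonempty (N' ≃ₗ[C] S₀)} ≤ LinearMap.ker πN) := by
      intro hle
      obtain ⟨x, hxN, hx0⟩ := (Submodule.ne_bot_iff N).mp hNne
      have h1 : πN x = ⟨x, hxN⟩ :=
        Submodule.linearProjOfIsCompl_apply_left hJ ⟨x, hxN⟩
      have h2 : πN x = 0 := hle (by rw [hTtop]; trivial)
      rw [h1] at h2
      exact hx0 (congrArg Subtype.val h2)
    have hex : ∃ N' ∈ {N' : Submodule C C | Nonempty (N' ≃ₗ[C] S₀)},
        ¬ N' ≤ LinearMap.ker πN := by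
      by_contra h
      push_neg at h
      exact hker (sSup_le h)
    obtain ⟨N', hN'iso, hN'⟩ := hex
    obtain ⟨eN'⟩ := hN'iso
    haveI : IsSimpleModule C N' := IsSimpleModule.congr eN'
    set f : N' →ₗ[C] N := πN.comp N'.subtype with hfdef
    have hf0 : f ≠ 0 := by
      intro h0
      apply hN'
      intro y hy
      have := LinearMap.ext_iff.mp h0 ⟨y, hy⟩
      simpa [hfdef, LinearMap.mem_ker] using this
    have hbijf : Function.Bijective f := LinearMap.bijective_of_ne_zero hf0
    exact ⟨(LinearEquiv.ofBijective f hbijf).symm.trans eN'⟩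
  -- internal direct sum decomposition
  have hint : DirectSum.IsInternal (fun i : s => (i : Submodule C C)) :=
    DirectSum.isInternal_submodule_of_iSupIndep_of_iSup_eq_top
      ((sSupIndep_iff s).mp hind) (by rw [← sSup_eq_iSup']; exact hsup)
  set eN : ∀ i : s, (i : Submodule C C) ≃ₗ[C] S₀ :=
    fun i => Classical.choice (hiso i i.2) with heN
  set e₂ : C ≃ₗ[C] (s → S₀) :=
    (LinearEquiv.ofBijective (DirectSum.coeLinearMap
        (fun i : s => (i : Submodule C C))) hint).symm.trans
      ((DirectSum.linearEquivFunOnFintype C s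
        (fun i : s => (i : Submodule C C))).trans (LinearEquiv.piCongrRight eN)) with he₂
  -- K-module structure compatibility
  haveI : SMulCommClass C K C := SMulCommClass.symm K C C
  haveI hCKS : SMulCommClass C K ↥S₀ :=
    ⟨fun c k x => Subtype.ext (smul_comm c k (x : C))⟩
  haveI : FiniteDimensional K ↥S₀ :=
    FiniteDimensional.of_injective ((S₀.subtype).restrictScalars K) Subtype.val_injective
  haveI : Nontrivial ↥S₀ := IsSimpleModule.nontrivial C ↥S₀
  -- first count : dim C = card s * dim S₀
  have hrk1 : Module.finrank K C = (Fintype.card s) * Module.finrank K ↥S₀ := by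
    rw [(e₂.restrictScalars K).finrank_eq, Module.finrank_pi_fintype,
      Finset.sum_const, Finset.card_univ, smul_eq_mul]
  -- second count : dim S₀ = card s
  have hrk2 : Module.finrank K ↥S₀ = Fintype.card s := by
    let ev : (C →ₗ[C] ↥S₀) ≃ₗ[K] ↥S₀ :=
      { toFun := fun f => f 1
        map_add' := fun f g => rfl
        map_smul' := fun k f => rfl
        invFun := fun m =>
          { toFun := fun c => c • m
            map_add' := fun a b => add_smul a b m
            map_smul' := fun a c => mul_smul a c m }
        left_inv := fun f => by
          apply LinearMap.ext
          intro c
          show c • f 1 = f c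
          rw [← map_smul, smul_eq_mul, mul_one]
        right_inv := fun m => one_smul C m }
    let congrL : ((s → ↥S₀) →ₗ[C] ↥S₀) ≃ₗ[K] (C →ₗ[C] ↥S₀) :=
      { toFun := fun g => g.comp (e₂ : C →ₗ[C] (s → ↥S₀))
        invFun := fun f => f.comp (e₂.symm : (s → ↥S₀) →ₗ[C] C)
        map_add' := fun g₁ g₂ => LinearMap.ext fun c => rfl
        map_smul' := fun k g => LinearMap.ext fun c => rfl
        left_inv := fun g => LinearMap.ext fun v => by simp
        right_inv := fun f => LinearMap.ext fun c => by simp }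
    haveI : FiniteDimensional K (↥S₀ →ₗ[C] ↥S₀) := by
      refine FiniteDimensional.of_injective
        (⟨⟨fun f => (f : ↥S₀ →ₗ[C] ↥S₀).restrictScalars K, fun f g => rfl⟩,
          fun k f => rfl⟩ : (↥S₀ →ₗ[C] ↥S₀) →ₗ[K] (↥S₀ →ₗ[K] ↥S₀)) ?_
      intro f g h
      apply LinearMap.ext
      intro v
      exact show f v = g v from LinearMap.ext_iff.mp h v
    have hD : Module.finrank K (↥S₀ →ₗ[C] ↥S₀) = 1 := by
      letI := Classical.decEq (Module.End C ↥S₀)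
      letI : DivisionRing (Module.End C ↥S₀) := Module.End.instDivisionRing
      have hscal : ∀ f : Module.End C ↥S₀, ∃ k : K, f = k • (1 : Module.End C ↥S₀) := by
        intro f
        obtain ⟨μ, hμ⟩ := Module.End.exists_eigenvalue
          (LinearMap.restrictScalars K f : Module.End K ↥S₀)
        obtain ⟨v, hv⟩ := hμ.exists_hasEigenvector
        refine ⟨μ, ?_⟩
        by_contra hne
        have hg : f - μ • (1 : Module.End C ↥S₀) ≠ 0 := sub_ne_zero.mpr hne
        have h2 : (f - μ • (1 : Module.End C ↥S₀)) v = 0 := by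
          have hfv : f v = μ • v := hv.apply_eq_smul
          simp [LinearMap.sub_apply, LinearMap.smul_apply, Module.End.one_apply, hfv]
        have h1 : ((f - μ • (1 : Module.End C ↥S₀))⁻¹
            * (f - μ • (1 : Module.End C ↥S₀))) v = v := by
          rw [inv_mul_cancel₀ hg]
          rfl
        rw [Module.End.mul_apply, h2, map_zero] at h1
        exact hv.2 h1.symm
      let eK : K →ₗ[K] Module.End C ↥S₀ :=
        { toFun := fun k => k • (1 : Module.End C ↥S₀)
          map_add' := fun a b => add_smul a b 1
          map_smul' := fun a b => by simp [mul_smul] }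
      have hbijK : Function.Bijective eK := by
        constructor
        · intro k₁ k₂ hk
          obtain ⟨v, hv0⟩ := exists_ne (0 : ↥S₀)
          have h := congrArg (fun g : Module.End C ↥S₀ => g v) hk
          simp only [eK, LinearMap.coe_mk, AddHom.coe_mk, LinearMap.smul_apply,
            Module.End.one_apply] at h
          have h' : (k₁ - k₂) • v = 0 := by rw [sub_smul, h, sub_self]
          rcases smul_eq_zero.mp h' with h'' | h''
          · exact sub_eq_zero.mp h''
          · exact absurd h'' hv0
        · intro f
          obtain ⟨k, hk⟩ := hscal f
          exact ⟨k, hk.symm⟩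
      rw [← (LinearEquiv.ofBijective eK hbijK).finrank_eq, Module.finrank_self]
    calc Module.finrank K ↥S₀
        = Module.finrank K (C →ₗ[C] ↥S₀) := ev.finrank_eq.symm
      _ = Module.finrank K ((s → ↥S₀) →ₗ[C] ↥S₀) := congrL.finrank_eq.symm
      _ = Module.finrank K (∀ _ : s, (↥S₀ →ₗ[C] ↥S₀)) :=
          ((LinearMap.lsum C (fun _ : s => ↥S₀) K).finrank_eq).symm
      _ = Fintype.card s := by
          rw [Module.finrank_pi_fintype]
          simp [hD]
  exact ⟨Fintype.card s, by rw [hrk1, hrk2]; ring⟩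

end FieldMain

end AzumayaSquareAux

namespace AzumayaSquareAux

section BaseChange

variable {R A : Type*} [CommRing R] [Ring A] [Algebra R A]
variable (S : Type*) [CommRing S] [Algebra R S]

theorem mlr_baseChange_surjective [Module.Finite R A] [Module.Projective R A]
    (hs : Function.Surjective (mulLeftRightHom R A)) :
    Function.Surjective (mulLeftRightHom S (S ⊗[R] A)) := by
  classical
  obtain ⟨n, p, hp⟩ := Module.Finite.exists_fin' R A
  obtain ⟨sec, hsec⟩ := Module.projective_lifting_property p LinearMap.id hp
  set g : Fin n → (A →ₗ[R] R) := fun i => (LinearMap.proj i).comp sec with hg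
  set x : Fin n → A := fun i => p (fun j => if i = j then (1 : R) else 0) with hx
  have hdual : ∀ a : A, ∑ i, g i a • x i = a := by
    intro a
    have h1 := pi_eq_sum_univ (sec a)
    have h2 : p (sec a) = a := LinearMap.ext_iff.mp hsec a
    calc ∑ i, g i a • x i
        = ∑ i, p (sec a i • (fun j => if i = j then (1 : R) else 0)) := by
          refine Finset.sum_congr rfl fun i _ => ?_
          rw [hx, ← map_smul]
          rfl
      _ = p (∑ i, sec a i • (fun j => if i = j then (1 : R) else 0)) := by rw [map_sum]
      _ = p (sec a) := by rw [← h1]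
      _ = a := h2
  -- the contraction functionals
  set toS : Fin n → (A →ₗ[R] S) := fun i => (Algebra.linearMap R S).comp (g i) with htoS
  set G : Fin n → (S ⊗[R] A →ₗ[S] S) := fun i =>
    TensorProduct.AlgebraTensorModule.lift
      (LinearMap.toSpanSingleton S (A →ₗ[R] S) (toS i)) with hG
  have hGtmul : ∀ i (t : S) (a : A), G i (t ⊗ₜ[R] a) = t * algebraMap R S (g i a) := by
    intro i t a
    simp [hG, htoS, LinearMap.toSpanSingleton_apply, smul_eq_mul]
  have hrep : ∀ c : S ⊗[R] A, ∑ i, G i c • ((1 : S) ⊗ₜ[R] x i) = c := by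
    intro c
    induction c using TensorProduct.induction_on with
    | zero => simp
    | tmul t a =>
      have hterm : ∀ i, G i (t ⊗ₜ[R] a) • ((1 : S) ⊗ₜ[R] x i)
          = t • ((1 : S) ⊗ₜ[R] (g i a • x i)) := by
        intro i
        rw [hGtmul, mul_smul, algebraMap_smul, TensorProduct.tmul_smul]
      rw [Finset.sum_congr rfl (fun i _ => hterm i), ← Finset.smul_sum,
        ← TensorProduct.tmul_sum]
      rw [show (∑ i, g i a • x i) = a from hdual a]
      rw [TensorProduct.smul_tmul', smul_eq_mul, mul_one]
    | add c₁ c₂ h₁ h₂ =>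
      simp only [map_add, add_smul, Finset.sum_add_distrib]
      rw [h₁, h₂]
  -- base changed sandwich maps are in the range
  have hbase : ∀ t : A ⊗[R] Aᵐᵒᵖ,
      LinearMap.baseChange S (mulLeftRightHom R A t)
        ∈ LinearMap.range (mulLeftRightHom S (S ⊗[R] A)) := by
    intro t
    induction t using TensorProduct.induction_on with
    | zero => rw [map_zero, LinearMap.baseChange_zero]; exact Submodule.zero_mem _
    | tmul a b =>
      refine ⟨((1 : S) ⊗ₜ[R] a) ⊗ₜ[S] (MulOpposite.op ((1 : S) ⊗ₜ[R] b.unop)), ?_⟩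
      apply LinearMap.ext
      intro c
      induction c using TensorProduct.induction_on with
      | zero => simp
      | tmul t y =>
        rw [mlr_tmul, MulOpposite.unop_op, Algebra.TensorProduct.tmul_mul_tmul,
          Algebra.TensorProduct.tmul_mul_tmul, LinearMap.baseChange_tmul, mlr_tmul]
        rw [one_mul, mul_one]
      | add c₁ c₂ h₁ h₂ => rw [map_add, map_add, h₁, h₂]
    | add t₁ t₂ h₁ h₂ =>
      rw [map_add, LinearMap.baseChange_add]
      exact Submodule.add_mem _ h₁ h₂
  -- the rank-one pieces with values `G i c • 1`
  have hBmem : ∀ i : Fin n,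
      (LinearMap.baseChange S ((LinearMap.toSpanSingleton R A 1).comp (g i)))
        ∈ LinearMap.range (mulLeftRightHom S (S ⊗[R] A)) := by
    intro i
    obtain ⟨t, ht⟩ := hs ((LinearMap.toSpanSingleton R A 1).comp (g i))
    rw [← ht]
    exact hbase t
  have hBval : ∀ (i : Fin n) (c : S ⊗[R] A),
      (LinearMap.baseChange S ((LinearMap.toSpanSingleton R A 1).comp (g i))) c
        = G i c • (1 : S ⊗[R] A) := by
    intro i c
    induction c using TensorProduct.induction_on with
    | zero => simp
    | tmul t a =>
      rw [LinearMap.baseChange_tmul, hGtmul]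
      rw [Algebra.TensorProduct.one_def]
      rw [LinearMap.comp_apply, LinearMap.toSpanSingleton_apply]
      rw [TensorProduct.tmul_smul, ← algebraMap_smul S ((g i) a) (t ⊗ₜ[R] (1 : A))]
      rw [TensorProduct.smul_tmul', TensorProduct.smul_tmul', smul_eq_mul, smul_eq_mul]
      rw [mul_one, mul_comm]
    | add c₁ c₂ h₁ h₂ => rw [map_add, map_add, h₁, h₂, add_smul]
  -- conclude
  intro f
  have hfmem : f ∈ LinearMap.range (mulLeftRightHom S (S ⊗[R] A)) := by
    have hfeq : f = ∑ i, (LinearMap.mulLeft S (f ((1 : S) ⊗ₜ[R] x i))) ∘ₗ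
        (LinearMap.baseChange S ((LinearMap.toSpanSingleton R A 1).comp (g i))) := by
      apply LinearMap.ext
      intro c
      rw [LinearMap.sum_apply]
      have : ∀ i, ((LinearMap.mulLeft S (f ((1 : S) ⊗ₜ[R] x i))) ∘ₗ
          (LinearMap.baseChange S ((LinearMap.toSpanSingleton R A 1).comp (g i)))) c
          = G i c • f ((1 : S) ⊗ₜ[R] x i) := by
        intro i
        rw [LinearMap.comp_apply, hBval, LinearMap.mulLeft_apply, mul_smul_comm, mul_one]
      rw [Finset.sum_congr rfl (fun i _ => this i)]
      conv_lhs => rw [← hrep c]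
      rw [map_sum]
      exact Finset.sum_congr rfl (fun i _ => map_smul f (G i c) ((1 : S) ⊗ₜ[R] x i))
    rw [hfeq]
    apply Submodule.sum_mem
    intro i _
    obtain ⟨t, ht⟩ := hBmem i
    exact ⟨((f ((1 : S) ⊗ₜ[R] x i)) ⊗ₜ[S] (1 : (S ⊗[R] A)ᵐᵒᵖ)) * t,
      by rw [mlr_mul_left, ht]⟩
  exact LinearMap.mem_range.mp hfmem

end BaseChange

end AzumayaSquareAux


open AzumayaSquareAux in
/-- For any prime `𝔭` of `R` and any Azumaya algebra `A` over `R`, the localization `A_𝔭`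
is a free `R_𝔭`-module whose rank is a perfect square. -/
theorem azumaya_rank_isSquare {R A : Type*} [CommRing R] [Ring A] [Algebra R A]
    (hA : IsAzumaya' R A) (p : Ideal R) [p.IsPrime] :
    Module.Free (Localization.AtPrime p) (LocalizedModule p.primeCompl A) ∧
    ∃ n : ℕ, Module.finrank (Localization.AtPrime p) (LocalizedModule p.primeCompl A)
      = n ^ 2 := by
  obtain ⟨hfin, hproj, hfaith, hbij⟩ := hA
  -- the localization is a base change
  let bc : (Localization.AtPrime p) ⊗[R] A ≃ₗ[Localization.AtPrime p]
      LocalizedModule p.primeCompl A :=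
    (IsLocalizedModule.isBaseChange p.primeCompl (Localization.AtPrime p)
      (LocalizedModule.mkLinearMap p.primeCompl A)).equiv
  haveI : Module.Finite (Localization.AtPrime p) ((Localization.AtPrime p) ⊗[R] A) :=
    Module.Finite.base_change R (Localization.AtPrime p) A
  haveI : Module.Finite (Localization.AtPrime p) (LocalizedModule p.primeCompl A) :=
    Module.Finite.equiv bc
  haveI : Module.Projective (Localization.AtPrime p) ((Localization.AtPrime p) ⊗[R] A) :=
    Module.Projective.tensorProduct
  haveI : Module.Projective (Localization.AtPrime p) (LocalizedModule p.primeCompl A) :=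
    Module.Projective.of_split (bc.symm : LocalizedModule p.primeCompl A →ₗ[Localization.AtPrime p] (Localization.AtPrime p) ⊗[R] A)
      (bc : (Localization.AtPrime p) ⊗[R] A →ₗ[Localization.AtPrime p] LocalizedModule p.primeCompl A)
      (by ext z; simp)
  haveI : Module.FinitePresentation (Localization.AtPrime p)
      (LocalizedModule p.primeCompl A) :=
    Module.finitePresentation_of_projective _ _
  have hfree : Module.Free (Localization.AtPrime p) (LocalizedModule p.primeCompl A) :=
    Module.free_of_flat_of_isLocalRing
  refine ⟨hfree, ?_⟩
  -- pass to the algebraic closure of the residue field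
  letI K := AlgebraicClosure (IsLocalRing.ResidueField (Localization.AtPrime p))
  have hsurj : Function.Surjective (mulLeftRightHom K (K ⊗[R] A)) :=
    mlr_baseChange_surjective K hbij.surjective
  haveI : FiniteDimensional K (K ⊗[R] A) := Module.Finite.base_change R K A
  obtain ⟨n, hn⟩ := finrank_eq_sq_of_surjective hsurj
  refine ⟨n, ?_⟩
  haveI : Module.Free (Localization.AtPrime p) ((Localization.AtPrime p) ⊗[R] A) :=
    Module.Free.of_equiv bc.symm
  have h1 : Module.finrank (Localization.AtPrime p) (LocalizedModule p.primeCompl A)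
      = Module.finrank (Localization.AtPrime p) ((Localization.AtPrime p) ⊗[R] A) :=
    bc.symm.finrank_eq
  have h2 : Module.finrank K (K ⊗[Localization.AtPrime p] ((Localization.AtPrime p) ⊗[R] A))
      = Module.finrank (Localization.AtPrime p) ((Localization.AtPrime p) ⊗[R] A) :=
    Module.finrank_baseChange
  have h3 : Module.finrank K (K ⊗[Localization.AtPrime p] ((Localization.AtPrime p) ⊗[R] A))
      = Module.finrank K (K ⊗[R] A) :=
    (TensorProduct.AlgebraTensorModule.cancelBaseChange R (Localization.AtPrime p) K K A).finrank_eq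
  rw [h1, ← h2, h3, hn]
end

section
/- Let k be a field of characteristic p > 0. The n-th Weyl algebra Aₙ(k), generated by x₁,…,xₙ,y₁,…,yₙ with relations [yᵢ,xⱼ] = δᵢⱼ and all x's commuting and all y's commuting, has center equal to the polynomial subalgebra k[x₁^p,…,xₙ^p,y₁^p,…,yₙ^p]. -/
/-- The defining relations of the `n`-th Weyl algebra: the `x`'s commute, the `y`'s commute,
and `[yᵢ, xⱼ] = δᵢⱼ`, i.e. `yᵢ xⱼ = xⱼ yᵢ + δᵢⱼ`. -/
inductive WeylRel (k : Type*) [CommRing k] (n : ℕ) :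
    FreeAlgebra k (Fin n ⊕ Fin n) → FreeAlgebra k (Fin n ⊕ Fin n) → Prop
  | xx (i j : Fin n) : WeylRel k n
      (FreeAlgebra.ι k (Sum.inl i) * FreeAlgebra.ι k (Sum.inl j))
      (FreeAlgebra.ι k (Sum.inl j) * FreeAlgebra.ι k (Sum.inl i))
  | yy (i j : Fin n) : WeylRel k n
      (FreeAlgebra.ι k (Sum.inr i) * FreeAlgebra.ι k (Sum.inr j))
      (FreeAlgebra.ι k (Sum.inr j) * FreeAlgebra.ι k (Sum.inr i))
  | yx (i j : Fin n) : WeylRel k n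
      (FreeAlgebra.ι k (Sum.inr i) * FreeAlgebra.ι k (Sum.inl j))
      (FreeAlgebra.ι k (Sum.inl j) * FreeAlgebra.ι k (Sum.inr i) + if i = j then 1 else 0)

/-- The `n`-th Weyl algebra over `k`, generated by `x₁,…,xₙ,y₁,…,yₙ` with relations
`[yᵢ,xⱼ] = δᵢⱼ`, all `x`'s commuting and all `y`'s commuting. -/
abbrev WeylAlgebra (k : Type*) [CommRing k] (n : ℕ) := RingQuot (WeylRel k n)

/-- The generator `xᵢ` of the Weyl algebra. -/
noncomputable def WeylAlgebra.x {k : Type*} [CommRing k] {n : ℕ} (i : Fin n) :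
    WeylAlgebra k n :=
  RingQuot.mkAlgHom k (WeylRel k n) (FreeAlgebra.ι k (Sum.inl i))

/-- The generator `yᵢ` of the Weyl algebra. -/
noncomputable def WeylAlgebra.y {k : Type*} [CommRing k] {n : ℕ} (i : Fin n) :
    WeylAlgebra k n :=
  RingQuot.mkAlgHom k (WeylRel k n) (FreeAlgebra.ι k (Sum.inr i))

namespace WeylAux

open WeylAlgebra MvPolynomial

variable {k : Type*} [CommRing k] {n : ℕ}

theorem w_xx (i j : Fin n) : (x i : WeylAlgebra k n) * x j = x j * x i := by
  rw [WeylAlgebra.x, WeylAlgebra.x, ← map_mul, RingQuot.mkAlgHom_rel k (WeylRel.xx i j), map_mul]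

theorem w_yy (i j : Fin n) : (y i : WeylAlgebra k n) * y j = y j * y i := by
  rw [WeylAlgebra.y, WeylAlgebra.y, ← map_mul, RingQuot.mkAlgHom_rel k (WeylRel.yy i j), map_mul]

theorem w_yx (i j : Fin n) : (y i : WeylAlgebra k n) * x j
    = x j * y i + if i = j then 1 else 0 := by
  rw [WeylAlgebra.x, WeylAlgebra.y, ← map_mul, RingQuot.mkAlgHom_rel k (WeylRel.yx i j),
    map_add, map_mul, apply_ite (RingQuot.mkAlgHom k (WeylRel k n)), map_one, map_zero]

theorem w_xy (i j : Fin n) : (x j : WeylAlgebra k n) * y i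
    = y i * x j - if i = j then 1 else 0 := by
  rw [w_yx i j]; abel

/-- Every element lies in the subalgebra generated by the generators. -/
theorem mem_adjoin_gens (z : WeylAlgebra k n) :
    z ∈ Algebra.adjoin k ((Set.range (x : Fin n → WeylAlgebra k n)) ∪ Set.range y) := by
  obtain ⟨w, rfl⟩ := RingQuot.mkAlgHom_surjective k (WeylRel k n) z
  have hw : w ∈ Algebra.adjoin k (Set.range (FreeAlgebra.ι k (X := Fin n ⊕ Fin n))) := by
    rw [FreeAlgebra.adjoin_range_ι]; exact Algebra.mem_top
  have : RingQuot.mkAlgHom k (WeylRel k n) w ∈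
      (Algebra.adjoin k (Set.range (FreeAlgebra.ι k (X := Fin n ⊕ Fin n)))).map
        (RingQuot.mkAlgHom k (WeylRel k n)) := ⟨w, hw, rfl⟩
  rw [AlgHom.map_adjoin] at this
  convert this using 2
  rw [← Set.range_comp, Sum.range_eq]
  rfl

section PDeriv

open MvPolynomial

variable {k : Type*} [CommRing k] {σ : Type*} [DecidableEq σ]

theorem pderiv_comm (u v : σ) (f : MvPolynomial σ k) :
    pderiv u (pderiv v f) = pderiv v (pderiv u f) := by
  induction f using MvPolynomial.induction_on' with
  | monomial s a =>
    rcases eq_or_ne u v with rfl | huv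
    · rfl
    · simp only [pderiv_monomial]
      rw [Finsupp.tsub_apply, Finsupp.tsub_apply, Finsupp.single_eq_of_ne huv,
        Finsupp.single_eq_of_ne (Ne.symm huv), Nat.sub_zero, Nat.sub_zero,
        tsub_right_comm]
      ring_nf
  | add f g hf hg => simp [hf, hg]

theorem coeff_X_mul_pderiv (v : σ) (f : MvPolynomial σ k) (d : σ →₀ ℕ) :
    coeff d (X v * pderiv v f) = (d v : k) * coeff d f := by
  induction f using MvPolynomial.induction_on' with
  | monomial s a =>
    rw [pderiv_monomial, X, monomial_mul, one_mul]
    rcases Nat.eq_zero_or_pos (s v) with h0 | hpos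
    · rw [h0, Nat.cast_zero, mul_zero, coeff_monomial]
      rcases eq_or_ne s d with rfl | hne
      · simp [h0]
      · simp only [coeff_monomial]
        split <;> simp_all
    · have : Finsupp.single v 1 + (s - Finsupp.single v 1) = s := by
        rw [add_comm, tsub_add_cancel_of_le]
        exact Finsupp.single_le_iff.2 hpos
      rw [this, coeff_monomial, coeff_monomial]
      rcases eq_or_ne s d with rfl | hne
      · simp [mul_comm]
      · simp [hne]
  | add f g hf hg => simp [mul_add, hf, hg]

end PDeriv

section Rep

open MvPolynomial WeylAlgebra

variable (k : Type*) [CommRing k] (n : ℕ)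

noncomputable instance xCommRing : CommRing (Algebra.adjoin k (Set.range (x : Fin n → WeylAlgebra k n))) :=
  Algebra.adjoinCommRingOfComm k (by
    rintro a ⟨i, rfl⟩ b ⟨j, rfl⟩
    exact w_xx i j)

noncomputable instance yCommRing : CommRing (Algebra.adjoin k (Set.range (y : Fin n → WeylAlgebra k n))) :=
  Algebra.adjoinCommRingOfComm k (by
    rintro a ⟨i, rfl⟩ b ⟨j, rfl⟩
    exact w_yy i j)

/-- The algebra map sending a polynomial `g(X₁,…,Xₙ)` to `g(x₁,…,xₙ)`. -/
noncomputable def Px : MvPolynomial (Fin n) k →ₐ[k] WeylAlgebra k n :=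
  (Algebra.adjoin k (Set.range (x : Fin n → WeylAlgebra k n))).val.comp
    (aeval fun i => (⟨x i, Algebra.subset_adjoin (Set.mem_range_self i)⟩ :
      Algebra.adjoin k (Set.range (x : Fin n → WeylAlgebra k n))))

noncomputable def Py : MvPolynomial (Fin n) k →ₐ[k] WeylAlgebra k n :=
  (Algebra.adjoin k (Set.range (y : Fin n → WeylAlgebra k n))).val.comp
    (aeval fun i => (⟨y i, Algebra.subset_adjoin (Set.mem_range_self i)⟩ :
      Algebra.adjoin k (Set.range (y : Fin n → WeylAlgebra k n))))

variable {k n}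

@[simp] theorem Px_X (i : Fin n) : Px k n (X i) = x i := by
  simp [Px]

@[simp] theorem Py_X (i : Fin n) : Py k n (X i) = y i := by
  simp [Py]

/-- Straightening: moving `y i` across a polynomial in the `x`'s produces a derivative term. -/
theorem y_mul_Px (i : Fin n) (g : MvPolynomial (Fin n) k) :
    y i * Px k n g = Px k n g * y i + Px k n (pderiv i g) := by
  induction g using MvPolynomial.induction_on with
  | C a =>
    rw [pderiv_C, map_zero, add_zero, ← MvPolynomial.algebraMap_eq, AlgHom.commutes]
    exact (Algebra.commutes a (y i : WeylAlgebra k n)).symm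
  | add f g hf hg =>
    simp only [map_add, mul_add, add_mul, hf, hg]
    abel
  | mul_X g j hg =>
    rw [map_mul, Px_X, ← mul_assoc, hg, add_mul, mul_assoc, w_yx i j, pderiv_mul,
      pderiv_X, map_add, map_mul, map_mul, Px_X]
    simp only [Pi.single_apply, mul_add, apply_ite (Px k n), map_one, map_zero, mul_ite,
      mul_one, mul_zero, ← mul_assoc]
    rcases eq_or_ne i j with rfl | h
    · simp only [if_pos rfl]; abel
    · simp only [if_neg h, if_neg (Ne.symm h)]; abel

theorem x_mul_Py (j : Fin n) (g : MvPolynomial (Fin n) k) :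
    x j * Py k n g = Py k n g * x j - Py k n (pderiv j g) := by
  induction g using MvPolynomial.induction_on with
  | C a =>
    rw [pderiv_C, map_zero, sub_zero, ← MvPolynomial.algebraMap_eq, AlgHom.commutes]
    exact (Algebra.commutes a (x j : WeylAlgebra k n)).symm
  | add f g hf hg =>
    simp only [map_add, mul_add, add_mul, hf, hg]
    abel
  | mul_X g i hg =>
    rw [map_mul, Py_X, ← mul_assoc, hg, sub_mul, mul_assoc, w_xy i j, pderiv_mul,
      pderiv_X, map_add, map_mul, map_mul, Py_X]
    simp only [Pi.single_apply, mul_sub, apply_ite (Py k n), map_one, map_zero, mul_ite,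
      mul_one, mul_zero, ← mul_assoc]
    rcases eq_or_ne i j with rfl | h
    · simp only [if_pos rfl]; abel
    · simp only [if_neg h, if_neg (Ne.symm h)]; abel

variable (k n) in
/-- The polynomial module on which the Weyl algebra acts. -/
abbrev PP := MvPolynomial (Fin n ⊕ Fin n) k

variable (k n) in
noncomputable def Dop (v : Fin n ⊕ Fin n) : Module.End k (PP k n) :=
  (pderiv v : Derivation k (PP k n) (PP k n)).toLinearMap

variable (k n) in
noncomputable def Mop (v : Fin n ⊕ Fin n) : Module.End k (PP k n) :=
  Algebra.lmul k (PP k n) (X v)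

@[simp] theorem Dop_apply (v : Fin n ⊕ Fin n) (f : PP k n) :
    Dop k n v f = pderiv v f := rfl

@[simp] theorem Mop_apply (v : Fin n ⊕ Fin n) (f : PP k n) :
    Mop k n v f = X v * f := rfl

variable (k n) in
noncomputable def f0 : FreeAlgebra k (Fin n ⊕ Fin n) →ₐ[k] Module.End k (PP k n) :=
  FreeAlgebra.lift k fun v =>
    Sum.elim (fun i => Mop k n (Sum.inl i)) (fun i => Mop k n (Sum.inr i) + Dop k n (Sum.inl i)) v

theorem f0_rel {a b : FreeAlgebra k (Fin n ⊕ Fin n)} (h : WeylRel k n a b) :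
    f0 k n a = f0 k n b := by
  induction h with
  | xx i j =>
    simp only [map_mul, f0, FreeAlgebra.lift_ι_apply, Sum.elim_inl]
    refine LinearMap.ext fun f => ?_
    simp only [Module.End.mul_apply, Mop_apply]
    ring
  | yy i j =>
    simp only [map_mul, f0, FreeAlgebra.lift_ι_apply, Sum.elim_inr]
    refine LinearMap.ext fun f => ?_
    simp only [Module.End.mul_apply, LinearMap.add_apply, Mop_apply, Dop_apply,
      pderiv_mul, mul_add, add_mul]
    rw [pderiv_comm, pderiv_X_of_ne (show (Sum.inr j : Fin n ⊕ Fin n) ≠ Sum.inl i by simp),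
      pderiv_X_of_ne (show (Sum.inr i : Fin n ⊕ Fin n) ≠ Sum.inl j by simp)]
    ring
  | yx i j =>
    simp only [map_mul, map_add, f0, FreeAlgebra.lift_ι_apply, Sum.elim_inl, Sum.elim_inr,
      apply_ite (FreeAlgebra.lift k _), map_one, map_zero]
    refine LinearMap.ext fun f => ?_
    simp only [Module.End.mul_apply, LinearMap.add_apply, Mop_apply, Dop_apply,
      pderiv_mul, pderiv_X, Pi.single_apply, ite_apply, Module.End.one_apply,
      LinearMap.zero_apply]
    rcases eq_or_ne i j with rfl | h
    · simp only [if_pos rfl]; simp only [if_true, Module.End.one_apply, mul_one]; ring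
    · simp only [if_neg h,
        if_neg (show ¬ ((Sum.inl j : Fin n ⊕ Fin n) = Sum.inl i) by
          simpa [eq_comm] using h)]
      simp only [LinearMap.zero_apply, add_zero, mul_zero]
      ring

variable (k n) in
/-- The standard representation of the Weyl algebra on polynomials. -/
noncomputable def rho : WeylAlgebra k n →ₐ[k] Module.End k (PP k n) :=
  RingQuot.liftAlgHom k ⟨f0 k n, fun _ _ h => f0_rel h⟩

@[simp] theorem rho_x (i : Fin n) (f : PP k n) :
    rho k n (x i) f = X (Sum.inl i) * f := by
  rw [rho, WeylAlgebra.x, RingQuot.liftAlgHom_mkAlgHom_apply, f0, FreeAlgebra.lift_ι_apply]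
  rfl

@[simp] theorem rho_y (i : Fin n) (f : PP k n) :
    rho k n (y i) f = X (Sum.inr i) * f + pderiv (Sum.inl i) f := by
  rw [rho, WeylAlgebra.y, RingQuot.liftAlgHom_mkAlgHom_apply, f0, FreeAlgebra.lift_ι_apply]
  rfl

theorem rho_Px (g : MvPolynomial (Fin n) k) (h : PP k n) :
    rho k n (Px k n g) h = rename Sum.inl g * h := by
  induction g using MvPolynomial.induction_on generalizing h with
  | C a =>
    rw [← MvPolynomial.algebraMap_eq, AlgHom.commutes, AlgHom.commutes,
      Module.algebraMap_end_apply, AlgHom.commutes, MvPolynomial.algebraMap_eq, ← C_mul']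
  | add f g hf hg => simp [add_mul, hf, hg]
  | mul_X g j hg =>
    rw [map_mul, map_mul, Px_X, map_mul, Module.End.mul_apply, rho_x, hg, rename_X]
    ring

theorem rho_Py (g : MvPolynomial (Fin n) k) (h : PP k n)
    (hh : ∀ j : Fin n, pderiv (Sum.inl j) h = 0) :
    rho k n (Py k n g) h = rename Sum.inr g * h := by
  induction g using MvPolynomial.induction_on generalizing h with
  | C a =>
    rw [← MvPolynomial.algebraMap_eq, AlgHom.commutes, AlgHom.commutes,
      Module.algebraMap_end_apply, AlgHom.commutes, MvPolynomial.algebraMap_eq, ← C_mul']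
  | add f g hf hg =>
    rw [map_add, map_add, LinearMap.add_apply, hf h hh, hg h hh, map_add, add_mul]
  | mul_X g j hg =>
    rw [map_mul, map_mul, Py_X, map_mul, Module.End.mul_apply, rho_y, hh j, add_zero,
      hg _ (fun i => by
        rw [pderiv_mul, pderiv_X_of_ne (show (Sum.inr j : Fin n ⊕ Fin n) ≠ Sum.inl i by simp),
          hh i, zero_mul, mul_zero, add_zero]),
      rename_X]
    ring

variable (k n) in
/-- The PBW monomial `x^a y^b` of the Weyl algebra. -/
noncomputable def W (q : (Fin n →₀ ℕ) × (Fin n →₀ ℕ)) : WeylAlgebra k n :=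
  Px k n (monomial q.1 1) * Py k n (monomial q.2 1)

variable (n) in
/-- Gluing a pair of multidegrees into a multidegree on `Fin n ⊕ Fin n`. -/
noncomputable def glue (q : (Fin n →₀ ℕ) × (Fin n →₀ ℕ)) : (Fin n ⊕ Fin n) →₀ ℕ :=
  q.1.mapDomain Sum.inl + q.2.mapDomain Sum.inr

@[simp] theorem glue_inl (q : (Fin n →₀ ℕ) × (Fin n →₀ ℕ)) (i : Fin n) :
    glue n q (Sum.inl i) = q.1 i := by
  rw [glue, Finsupp.add_apply, Finsupp.mapDomain_apply Sum.inl_injective,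
    Finsupp.mapDomain_notin_range _ _ (by simp), add_zero]

@[simp] theorem glue_inr (q : (Fin n →₀ ℕ) × (Fin n →₀ ℕ)) (i : Fin n) :
    glue n q (Sum.inr i) = q.2 i := by
  rw [glue, Finsupp.add_apply, Finsupp.mapDomain_apply Sum.inr_injective,
    Finsupp.mapDomain_notin_range _ _ (by simp), zero_add]

theorem glue_injective : Function.Injective (glue n) := by
  intro q q' h
  refine Prod.ext (Finsupp.ext fun i => ?_) (Finsupp.ext fun i => ?_)
  · rw [← glue_inl q i, ← glue_inl q' i, h]
  · rw [← glue_inr q i, ← glue_inr q' i, h]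

theorem rho_W_one (q : (Fin n →₀ ℕ) × (Fin n →₀ ℕ)) :
    rho k n (W k n q) 1 = monomial (glue n q) 1 := by
  rw [W, map_mul, Module.End.mul_apply, rho_Py _ _ (fun j => by rw [pderiv_one]), mul_one,
    rho_Px, rename_monomial, rename_monomial, monomial_mul, one_mul, glue]

theorem x_mul_W (i : Fin n) (q : (Fin n →₀ ℕ) × (Fin n →₀ ℕ)) :
    x i * W k n q = W k n (Finsupp.single i 1 + q.1, q.2) := by
  rw [W, W, ← mul_assoc, ← Px_X (k := k) (n := n) i, ← map_mul, X, monomial_mul, one_mul]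

theorem y_mul_W (i : Fin n) (q : (Fin n →₀ ℕ) × (Fin n →₀ ℕ)) :
    y i * W k n q = W k n (q.1, Finsupp.single i 1 + q.2)
      + q.1 i • W k n (q.1 - Finsupp.single i 1, q.2) := by
  rw [W, ← mul_assoc, y_mul_Px, add_mul, mul_assoc, ← Py_X (k := k) (n := n) i, ← map_mul,
    X, monomial_mul, one_mul, pderiv_monomial, one_mul]
  have : (monomial (q.1 - Finsupp.single i 1) ((q.1 i : k))) =
      q.1 i • monomial (q.1 - Finsupp.single i 1) (1 : k) := by
    rw [← map_nsmul, nsmul_eq_mul, mul_one]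
  rw [this, map_nsmul, smul_mul_assoc]
  simp only [W]

theorem W_span (z : WeylAlgebra k n) : z ∈ Submodule.span k (Set.range (W k n)) := by
  set S := Submodule.span k (Set.range (W k n)) with hS
  have hmul : ∀ z' : WeylAlgebra k n, (∀ q, z' * W k n q ∈ S) → ∀ s ∈ S, z' * s ∈ S := by
    intro z' hz' s hs
    induction hs using Submodule.span_induction with
    | mem s hs => obtain ⟨q, rfl⟩ := hs; exact hz' q
    | zero => rw [mul_zero]; exact S.zero_mem
    | add a b _ _ ha hb => rw [mul_add]; exact S.add_mem ha hb
    | smul c a _ ha => rw [mul_smul_comm]; exact S.smul_mem c ha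
  have hgen : ∀ z' : WeylAlgebra k n, ∀ s ∈ S, z' * s ∈ S := by
    intro z'
    have hz := mem_adjoin_gens z'
    induction hz using Algebra.adjoin_induction with
    | mem g hg =>
      rcases hg with ⟨i, rfl⟩ | ⟨i, rfl⟩
      · exact hmul _ fun q => by
          rw [x_mul_W]; exact Submodule.subset_span ⟨_, rfl⟩
      · exact hmul _ fun q => by
          rw [y_mul_W]
          refine S.add_mem (Submodule.subset_span ⟨_, rfl⟩) ?_
          rw [← Nat.cast_smul_eq_nsmul k]
          exact S.smul_mem _ (Submodule.subset_span ⟨_, rfl⟩)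
    | algebraMap r =>
      intro s hs
      rw [← Algebra.smul_def]; exact S.smul_mem r hs
    | add a b _ _ hpa hpb =>
      intro s hs; rw [add_mul]; exact S.add_mem (hpa s hs) (hpb s hs)
    | mul a b _ _ hpa hpb =>
      intro s hs; rw [mul_assoc]; exact hpa _ (hpb s hs)
  have h1 : (1 : WeylAlgebra k n) ∈ S := by
    refine Submodule.subset_span ⟨(0, 0), ?_⟩
    simp [W, monomial_zero']
  simpa using hgen z 1 h1

theorem rho_comm_mulY (i : Fin n) (z : WeylAlgebra k n) :
    ∀ g : PP k n, rho k n z (X (Sum.inr i) * g) = X (Sum.inr i) * rho k n z g := by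
  have hz := mem_adjoin_gens z
  induction hz using Algebra.adjoin_induction with
  | mem g hg =>
    rcases hg with ⟨j, rfl⟩ | ⟨j, rfl⟩
    · intro g; rw [rho_x, rho_x]; ring
    · intro g
      rw [rho_y, rho_y, pderiv_mul,
        pderiv_X_of_ne (show (Sum.inr i : Fin n ⊕ Fin n) ≠ Sum.inl j by simp), zero_mul,
        zero_add]
      ring
  | algebraMap r =>
    intro g
    rw [AlgHom.commutes, Module.algebraMap_end_apply, Module.algebraMap_end_apply,
      mul_smul_comm]
  | add a b _ _ hpa hpb =>
    intro g
    rw [map_add, LinearMap.add_apply, LinearMap.add_apply, hpa, hpb, mul_add]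
  | mul a b _ _ hpa hpb =>
    intro g
    have hab : rho k n (a * b) = rho k n a * rho k n b := map_mul _ _ _
    rw [hab, Module.End.mul_apply, Module.End.mul_apply, hpb, hpa]

theorem rho_comm_T (i : Fin n) (z : WeylAlgebra k n) :
    ∀ g : PP k n, rho k n z (X (Sum.inl i) * g + pderiv (Sum.inr i) g)
      = X (Sum.inl i) * rho k n z g + pderiv (Sum.inr i) (rho k n z g) := by
  have hz := mem_adjoin_gens z
  induction hz using Algebra.adjoin_induction with
  | mem g hg =>
    rcases hg with ⟨j, rfl⟩ | ⟨j, rfl⟩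
    · intro g
      rw [rho_x, rho_x, mul_add, pderiv_mul,
        pderiv_X_of_ne (show (Sum.inl j : Fin n ⊕ Fin n) ≠ Sum.inr i by simp), zero_mul,
        zero_add]
      ring
    · intro g
      rw [rho_y, rho_y]
      simp only [Derivation.map_add, pderiv_mul, pderiv_X, Pi.single_apply, mul_add]
      rw [pderiv_comm (Sum.inl j) (Sum.inr i)]
      rcases eq_or_ne i j with rfl | h
      · simp only [if_pos rfl]; ring
      · rw [if_neg (show ¬((Sum.inl i : Fin n ⊕ Fin n) = Sum.inl j) by simpa using h),
          if_neg (show ¬((Sum.inr j : Fin n ⊕ Fin n) = Sum.inr i) by simpa [eq_comm] using h)]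
        ring
  | algebraMap r =>
    intro g
    rw [AlgHom.commutes, Module.algebraMap_end_apply, Module.algebraMap_end_apply, smul_add,
      mul_smul_comm, Derivation.map_smul]
  | add a b _ _ hpa hpb =>
    intro g
    have hab : rho k n (a + b) = rho k n a + rho k n b := map_add _ _ _
    rw [hab, LinearMap.add_apply, LinearMap.add_apply, hpa, hpb, mul_add, Derivation.map_add]
    ring
  | mul a b _ _ hpa hpb =>
    intro g
    have hab : rho k n (a * b) = rho k n a * rho k n b := map_mul _ _ _
    rw [hab, Module.End.mul_apply, Module.End.mul_apply, hpb, hpa]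

theorem central_pderiv_inr (z : WeylAlgebra k n)
    (hz : z ∈ Subalgebra.center k (WeylAlgebra k n)) (i : Fin n) :
    pderiv (Sum.inr i) (rho k n z 1) = 0 := by
  have h : rho k n (x i * z) 1 = rho k n (z * x i) 1 := by
    rw [Subalgebra.mem_center_iff.1 hz (x i)]
  rw [map_mul, map_mul, Module.End.mul_apply, Module.End.mul_apply] at h
  simp only [rho_x] at h
  have h2 := rho_comm_T i z 1
  rw [pderiv_one, add_zero] at h2
  rw [h2] at h
  exact (left_eq_add).1 h

theorem central_pderiv_inl (z : WeylAlgebra k n)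
    (hz : z ∈ Subalgebra.center k (WeylAlgebra k n)) (i : Fin n) :
    pderiv (Sum.inl i) (rho k n z 1) = 0 := by
  have h : rho k n (y i * z) 1 = rho k n (z * y i) 1 := by
    rw [Subalgebra.mem_center_iff.1 hz (y i)]
  rw [map_mul, map_mul, Module.End.mul_apply, Module.End.mul_apply] at h
  simp only [rho_y] at h
  rw [pderiv_one, add_zero, rho_comm_mulY i z 1] at h
  exact (add_eq_left).1 h

section CharPstuff

variable (p : ℕ) [CharP k p]

theorem pderiv_X_pow_p (i j : Fin n) :
    pderiv j ((X i : MvPolynomial (Fin n) k) ^ p) = 0 := by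
  rw [Derivation.leibniz_pow, ← Nat.cast_smul_eq_nsmul k p, CharP.cast_eq_zero, zero_smul]

theorem xp_central (i : Fin n) :
    (x i : WeylAlgebra k n) ^ p ∈ Subalgebra.center k (WeylAlgebra k n) := by
  rw [Subalgebra.mem_center_iff]
  intro b
  have hxp : (x i : WeylAlgebra k n) ^ p = Px k n (X i ^ p) := by rw [map_pow, Px_X]
  have hb := mem_adjoin_gens b
  induction hb using Algebra.adjoin_induction with
  | mem g hg =>
    rcases hg with ⟨j, rfl⟩ | ⟨j, rfl⟩
    · rw [hxp, ← Px_X (k := k) (n := n) j, ← map_mul, ← map_mul, mul_comm]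
    · rw [hxp, y_mul_Px, pderiv_X_pow_p, map_zero, add_zero]
  | algebraMap r => rw [← Algebra.commutes r (x i ^ p)]
  | add a b _ _ ha hb => rw [add_mul, ha, hb, mul_add]
  | mul a b _ _ ha hb => rw [mul_assoc, hb, ← mul_assoc, ha, mul_assoc]

theorem yp_central (i : Fin n) :
    (y i : WeylAlgebra k n) ^ p ∈ Subalgebra.center k (WeylAlgebra k n) := by
  rw [Subalgebra.mem_center_iff]
  intro b
  have hyp : (y i : WeylAlgebra k n) ^ p = Py k n (X i ^ p) := by rw [map_pow, Py_X]
  have hb := mem_adjoin_gens b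
  induction hb using Algebra.adjoin_induction with
  | mem g hg =>
    rcases hg with ⟨j, rfl⟩ | ⟨j, rfl⟩
    · rw [hyp, x_mul_Py, pderiv_X_pow_p, map_zero, sub_zero]
    · rw [hyp, ← Py_X (k := k) (n := n) j, ← map_mul, ← map_mul, mul_comm]
  | algebraMap r => rw [← Algebra.commutes r (y i ^ p)]
  | add a b _ _ ha hb => rw [add_mul, ha, hb, mul_add]
  | mul a b _ _ ha hb => rw [mul_assoc, hb, ← mul_assoc, ha, mul_assoc]

end CharPstuff

theorem W_mem_adjoin (p : ℕ) (q : (Fin n →₀ ℕ) × (Fin n →₀ ℕ))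
    (h1 : ∀ i : Fin n, p ∣ q.1 i) (h2 : ∀ i : Fin n, p ∣ q.2 i) :
    W k n q ∈ Algebra.adjoin k
      ((Set.range fun i : Fin n => (x i : WeylAlgebra k n) ^ p) ∪
       (Set.range fun i : Fin n => (y i : WeylAlgebra k n) ^ p)) := by
  have key : ∀ (P : MvPolynomial (Fin n) k →ₐ[k] WeylAlgebra k n)
      (w : Fin n → WeylAlgebra k n) (hw : ∀ i, P (X i) = w i) (a : Fin n →₀ ℕ)
      (ha : ∀ i, p ∣ a i),
      P (monomial a 1) ∈ Algebra.adjoin k (Set.range fun i : Fin n => w i ^ p) := by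
    intro P w hw a ha
    have hx : (monomial a 1 : MvPolynomial (Fin n) k) ∈
        Algebra.adjoin k (Set.range fun i : Fin n => (X i : MvPolynomial (Fin n) k) ^ p) := by
      rw [monomial_eq, C_1, one_mul]
      refine Subalgebra.prod_mem _ fun i _ => ?_
      obtain ⟨m, hm⟩ := ha i
      dsimp only
      rw [hm, pow_mul]
      exact pow_mem (Algebra.subset_adjoin (Set.mem_range_self i)) m
    have hmap : P (monomial a 1) ∈
        (Algebra.adjoin k (Set.range fun i : Fin n => (X i : MvPolynomial (Fin n) k) ^ p)).map
          P := ⟨_, hx, rfl⟩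
    rw [AlgHom.map_adjoin] at hmap
    have himg : P '' (Set.range fun i : Fin n => (X i : MvPolynomial (Fin n) k) ^ p)
        = Set.range fun i : Fin n => w i ^ p := by
      rw [← Set.range_comp]
      exact congrArg Set.range (funext fun i => by simp [Function.comp, map_pow, hw])
    rwa [himg] at hmap
  rw [W]
  refine mul_mem ?_ ?_
  · exact Algebra.adjoin_mono Set.subset_union_left
      (key (Px k n) (fun i => x i) (fun i => Px_X i) q.1 h1)
  · exact Algebra.adjoin_mono Set.subset_union_right
      (key (Py k n) (fun i => y i) (fun i => Py_X i) q.2 h2)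

theorem coeff_rho (z : WeylAlgebra k n) (c : ((Fin n →₀ ℕ) × (Fin n →₀ ℕ)) →₀ k)
    (hc : (c.sum fun q cq => cq • W k n q) = z) (q0 : (Fin n →₀ ℕ) × (Fin n →₀ ℕ)) :
    coeff (glue n q0) (rho k n z 1) = c q0 := by
  have h1 : rho k n z 1 = ∑ q ∈ c.support, c q • monomial (glue n q) (1 : k) := by
    rw [← hc, map_finsuppSum, Finsupp.sum, LinearMap.sum_apply]
    refine Finset.sum_congr rfl fun q _ => ?_
    rw [map_smul, LinearMap.smul_apply, rho_W_one]
  rw [h1, coeff_sum]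
  have h2 : ∀ q ∈ c.support,
      coeff (glue n q0) (c q • monomial (glue n q) (1 : k))
        = if q = q0 then c q else 0 := by
    intro q _
    by_cases hq : q = q0
    · subst hq; simp [coeff_monomial]
    · rw [if_neg hq, coeff_smul, coeff_monomial,
        if_neg (fun hg => hq (glue_injective hg)), smul_zero]
  rw [Finset.sum_congr rfl h2, Finset.sum_ite_eq' c.support q0 (fun q => c q)]
  by_cases hq0 : q0 ∈ c.support
  · rw [if_pos hq0]
  · rw [if_neg hq0, eq_comm]
    exact Finsupp.notMem_support_iff.1 hq0

end Rep

end WeylAux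


/-- Revoy's theorem: over a field `k` of characteristic `p > 0`, the center of the `n`-th Weyl
algebra `Aₙ(k)` is exactly the subalgebra `k[x₁^p,…,xₙ^p,y₁^p,…,yₙ^p]` generated by the `p`-th
powers of the generators. -/
theorem weylAlgebra_center (k : Type*) [Field k] (p : ℕ) [CharP k p] (hp : p ≠ 0) (n : ℕ) :
    Subalgebra.center k (WeylAlgebra k n) =
      Algebra.adjoin k
        ((Set.range fun i : Fin n => WeylAlgebra.x i ^ p) ∪
         (Set.range fun i : Fin n => WeylAlgebra.y i ^ p)) := by
  apply le_antisymm
  · intro z hz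
    obtain ⟨c, hc⟩ := Finsupp.mem_span_range_iff_exists_finsupp.mp (WeylAux.W_span z)
    have hdvd : ∀ q ∈ c.support, (∀ i : Fin n, p ∣ q.1 i) ∧ (∀ i : Fin n, p ∣ q.2 i) := by
      intro q hq
      have hne : MvPolynomial.coeff (WeylAux.glue n q) (WeylAux.rho k n z 1) ≠ 0 := by
        rw [WeylAux.coeff_rho z c hc q]
        exact Finsupp.mem_support_iff.1 hq
      have key : ∀ v : Fin n ⊕ Fin n,
          MvPolynomial.pderiv v (WeylAux.rho k n z 1) = 0 → p ∣ WeylAux.glue n q v := by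
        intro v hv
        have h0 := WeylAux.coeff_X_mul_pderiv v (WeylAux.rho k n z 1) (WeylAux.glue n q)
        rw [hv, mul_zero, MvPolynomial.coeff_zero, eq_comm, mul_eq_zero] at h0
        rcases h0 with h0 | h0
        · exact (CharP.cast_eq_zero_iff k p _).1 h0
        · exact absurd h0 hne
      constructor
      · intro i
        have := key (Sum.inl i) (WeylAux.central_pderiv_inl z hz i)
        rwa [WeylAux.glue_inl] at this
      · intro i
        have := key (Sum.inr i) (WeylAux.central_pderiv_inr z hz i)
        rwa [WeylAux.glue_inr] at this
    rw [← hc, Finsupp.sum]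
    exact Subalgebra.sum_mem _ fun q hq =>
      Subalgebra.smul_mem _ (WeylAux.W_mem_adjoin p q (hdvd q hq).1 (hdvd q hq).2) _
  · rw [Algebra.adjoin_le_iff]
    rintro g (⟨i, rfl⟩ | ⟨i, rfl⟩)
    · exact WeylAux.xp_central p i
    · exact WeylAux.yp_central p i
end
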